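/- arXiv:2106.13104 — 9 statements merged into one kernel-verified Lean document; each statement's English description precedes it below -/
import Mathlib

section
/- For every r ≥ 1 and pairwise distinct real (or rational function) variables x_1,…,x_r, y_1,…,y_r with all denominators nonzero, the identity ∑_{i=1}^r x_i + ∑_{j=1}^r y_j + r = ∑_{t=1}^r x_t ∏_{k≠t} (x_k − x_t + 1)/(x_k − x_t) · ∏_{l=1}^r (x_t + y_l + 1)/(x_t + y_l) + ∑_{m=1}^r y_m ∏_{k≠m} (y_k − y_m + 1)/(y_k − y_m) · ∏_{l=1}^r (x_l + y_m + 1)/(x_l + y_m) holds. -/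
/-!
Put `p := (x, -y)` and `q := (x + 1, -y - 1)` on `Fin r ⊕ Fin r`. Up to sign, the summands of the
right-hand side are the values of `f := X * (∏ j, (X - q j) - ∏ j, (X - p j))` at the nodes
`p i`, divided by `∏ j ≠ i, (p i - p j)`. As `∑ q = ∑ p`, `f` has degree `< 2r`, so by Lagrange
interpolation their sum is the coefficient of `X ^ (2r - 1)` in `f`. That coefficient is a
difference of second elementary symmetric functions, which Newton's identity turns into
`(∑ p² - ∑ q²) / 2 = -(∑ x + ∑ y + r)`.
-/

open Finset Polynomial

theorem two_mul_esymm_two_map_univ {σ R : Type*} [Fintype σ] [CommRing R] (f : σ → R) :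
    2 * (univ.val.map f).esymm 2 = (∑ i, f i) ^ 2 - ∑ i, f i ^ 2 := by
  have newton := congrArg (MvPolynomial.aeval f) (MvPolynomial.mul_esymm_eq_sum σ R 2)
  have hanti : {a ∈ antidiagonal 2 | a.1 < 2} = {(0, 2), (1, 1)} := by decide
  rw [hanti, sum_pair (by decide)] at newton
  simp only [MvPolynomial.esymm_zero, MvPolynomial.esymm_one, MvPolynomial.psum, map_mul, map_add,
    map_sum, map_pow, map_neg, map_one, map_natCast, MvPolynomial.aeval_X,
    MvPolynomial.aeval_esymm_eq_multiset_esymm, pow_one] at newton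
  linear_combination newton

namespace Polynomial

variable {ι R : Type*} [CommRing R]

theorem two_mul_coeff_prod_X_sub_C_card_sub_two [Fintype ι] (v : ι → R)
    (h : 2 ≤ Fintype.card ι) :
    2 * (∏ i, (X - C (v i))).coeff (Fintype.card ι - 2) = (∑ i, v i) ^ 2 - ∑ i, v i ^ 2 := by
  have vieta := Multiset.prod_X_sub_C_coeff (univ.val.map v) (k := Fintype.card ι - 2) (by simp)
  simp only [Multiset.map_map, Function.comp_def, Multiset.card_map, card_val, card_univ,
    Nat.sub_sub_self h] at vieta
  rw [prod_eq_multiset_prod, vieta, ← two_mul_esymm_two_map_univ]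
  ring

theorem degree_prod_X_sub_C_sub_prod_X_sub_C_lt (s : Finset ι) {p q : ι → R}
    (hsum : ∑ i ∈ s, q i = ∑ i ∈ s, p i) :
    (∏ i ∈ s, (X - C (q i)) - ∏ i ∈ s, (X - C (p i))).degree < ↑(#s - 1) := by
  nontriviality R
  have hdeg (v : ι → R) : (∏ i ∈ s, (X - C (v i))).natDegree = #s :=
    natDegree_finsetProd_X_sub_C_eq_card s v
  have hlead (v : ι → R) : (∏ i ∈ s, (X - C (v i))).coeff #s = 1 :=
    hdeg v ▸ (monic_prod_of_monic _ _ fun i _ => monic_X_sub_C (v i)).coeff_natDegree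
  rw [degree_lt_iff_coeff_zero]
  intro k hk
  rw [coeff_sub, sub_eq_zero]
  rcases lt_trichotomy k #s with hlt | rfl | hgt
  · obtain rfl : k = #s - 1 := by omega
    rw [prod_X_sub_C_coeff_card_pred _ _ (by omega), prod_X_sub_C_coeff_card_pred _ _ (by omega),
      hsum]
  · rw [hlead, hlead]
  · rw [coeff_eq_zero_of_natDegree_lt (by rwa [hdeg]),
      coeff_eq_zero_of_natDegree_lt (by rwa [hdeg])]

end Polynomial

section ResidueTerm

variable {ι F : Type*} [Fintype ι] [DecidableEq ι] [Field F]

/-- For injective `p`, the residue of `z * ∏ j, (z - q j) / ∏ j, (z - p j)` at `z = p i`. -/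
def residueTerm (p q : ι → F) (i : ι) : F :=
  p i * (p i - q i) * ∏ j ∈ univ.erase i, (p i - q j) / (p i - p j)

theorem two_mul_sum_residueTerm {p q : ι → F} (hp : Function.Injective p)
    (hcard : 2 ≤ Fintype.card ι) (hsum : ∑ i, q i = ∑ i, p i) :
    2 * ∑ i, residueTerm p q i = ∑ i, p i ^ 2 - ∑ i, q i ^ 2 := by
  set E : F[X] := ∏ j, (X - C (q j)) - ∏ j, (X - C (p j))
  have hdeg : (E * X).degree < ↑(#(univ : Finset ι)) :=
    calc (E * X).degree = E.degree + 1 := degree_mul_X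
      _ < ↑(#(univ : Finset ι) - 1) + 1 :=
        WithBot.add_lt_add_right WithBot.one_ne_bot (degree_prod_X_sub_C_sub_prod_X_sub_C_lt _ hsum)
      _ = ↑(#(univ : Finset ι)) := by norm_cast; rw [card_univ]; omega
  have heval (i : ι) : (E * X).eval (p i) = p i * ∏ j, (p i - q j) := by
    simp [E, eval_prod, prod_eq_zero (mem_univ i), mul_comm]
  have hcoeff : 2 * (E * X).coeff (Fintype.card ι - 1) = ∑ i, p i ^ 2 - ∑ i, q i ^ 2 := by
    obtain ⟨m, hm⟩ : ∃ m, Fintype.card ι = m + 2 := ⟨_, (Nat.sub_add_cancel hcard).symm⟩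
    have hp2 := two_mul_coeff_prod_X_sub_C_card_sub_two p hcard
    have hq2 := two_mul_coeff_prod_X_sub_C_card_sub_two q hcard
    rw [hm, Nat.add_sub_cancel] at hp2 hq2
    rw [hm, show m + 2 - 1 = m + 1 by rfl, coeff_mul_X, coeff_sub, mul_sub, hp2, hq2, hsum]
    ring
  rw [← hcoeff, ← card_univ, Lagrange.coeff_eq_sum hp.injOn hdeg]
  congr 1
  refine sum_congr rfl fun i _ => ?_
  rw [residueTerm, heval, ← mul_prod_erase univ _ (mem_univ i), prod_div_distrib]
  ring

end ResidueTerm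

namespace Finset

variable {α β : Type*} [Fintype α] [Fintype β] [DecidableEq α] [DecidableEq β]

theorem univ_erase_inl (a : α) :
    (univ : Finset (α ⊕ β)).erase (.inl a) = (univ.erase a).disjSum univ := by
  ext (_ | _) <;> simp

theorem univ_erase_inr (b : β) :
    (univ : Finset (α ⊕ β)).erase (.inr b) = univ.disjSum (univ.erase b) := by
  ext (_ | _) <;> simp

end Finset

section DoubleNodes

variable {α β F : Type*} [Fintype α] [Fintype β] [Field F] (x : α → F) (y : β → F)

theorem sum_sq_elim_sub_sum_sq_elim :
    ∑ i, Sum.elim x (-y) i ^ 2 - ∑ i, Sum.elim (x + 1) (-y - 1) i ^ 2 =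
      -2 * (∑ i, x i + ∑ j, y j) - Fintype.card α - Fintype.card β := by
  simp only [Fintype.sum_sum_type, Sum.elim_inl, Sum.elim_inr, Pi.add_apply, Pi.sub_apply,
    Pi.neg_apply, Pi.one_apply, even_two, Even.neg_pow, add_sq, sub_sq, mul_one, one_pow, mul_neg,
    neg_mul, sub_neg_eq_add, sum_add_distrib, ← mul_sum, sum_const, card_univ, nsmul_eq_mul]
  ring

variable [DecidableEq α] [DecidableEq β]

theorem residueTerm_inl (t : α) :
    residueTerm (Sum.elim x (-y)) (Sum.elim (x + 1) (-y - 1)) (.inl t) =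
      -(x t * (∏ k ∈ univ.erase t, (x k - x t + 1) / (x k - x t)) *
          ∏ l, (x t + y l + 1) / (x t + y l)) := by
  have hxx (k : α) : (x t - (x k + 1)) / (x t - x k) = (x k - x t + 1) / (x k - x t) := by
    rw [← neg_div_neg_eq]; ring_nf
  have hxy (l : β) : (x t - (-y l - 1)) / (x t - -y l) = (x t + y l + 1) / (x t + y l) := by
    ring_nf
  rw [residueTerm, univ_erase_inl, prod_disjSum]
  simp only [Sum.elim_inl, Sum.elim_inr, Pi.add_apply, Pi.sub_apply, Pi.neg_apply, Pi.one_apply,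
    hxx, hxy]
  ring

theorem residueTerm_inr (m : β) :
    residueTerm (Sum.elim x (-y)) (Sum.elim (x + 1) (-y - 1)) (.inr m) =
      -(y m * (∏ k ∈ univ.erase m, (y k - y m + 1) / (y k - y m)) *
          ∏ l, (x l + y m + 1) / (x l + y m)) := by
  have hyx (l : α) : (-y m - (x l + 1)) / (-y m - x l) = (x l + y m + 1) / (x l + y m) := by
    rw [← neg_div_neg_eq]; ring_nf
  have hyy (k : β) : (-y m - (-y k - 1)) / (-y m - -y k) = (y k - y m + 1) / (y k - y m) := by
    ring_nf
  rw [residueTerm, univ_erase_inr, prod_disjSum]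
  simp only [Sum.elim_inl, Sum.elim_inr, Pi.add_apply, Pi.sub_apply, Pi.neg_apply, Pi.one_apply,
    hyx, hyy]
  ring

end DoubleNodes

/-- **Double Sum Lemma.** -/
theorem double_sum_lemma {F : Type*} [Field F] [CharZero F] (r : ℕ) (hr : 1 ≤ r)
    (x y : Fin r → F) (hx : Function.Injective x) (hy : Function.Injective y)
    (hxy : ∀ k l, x k + y l ≠ 0) :
    (∑ i, x i) + (∑ j, y j) + (r : F) =
      (∑ t, x t * (∏ k ∈ univ.erase t, (x k - x t + 1) / (x k - x t)) *
          ∏ l, (x t + y l + 1) / (x t + y l)) +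
      ∑ m, y m * (∏ k ∈ univ.erase m, (y k - y m + 1) / (y k - y m)) *
          ∏ l, (x l + y m + 1) / (x l + y m) := by
  have hp : Function.Injective (Sum.elim x (-y)) :=
    hx.sumElim (neg_injective.comp hy) fun k l h => hxy k l (eq_neg_iff_add_eq_zero.mp h)
  have key := two_mul_sum_residueTerm (q := Sum.elim (x + 1) (-y - 1)) hp
    (by simp only [Fintype.card_sum, Fintype.card_fin]; omega)
    (by simp [Fintype.sum_sum_type, sum_add_distrib])
  rw [sum_sq_elim_sub_sum_sq_elim, Fintype.sum_sum_type, Fintype.card_fin] at key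
  simp only [residueTerm_inl, residueTerm_inr, sum_neg_distrib] at key
  linear_combination key / 2
end

section
/- For every positive integer r and pairwise distinct variables x_1,…,x_r such that x_j + x_l ≠ 1 for all j ≠ l, the identity x_1 + ⋯ + x_r = ∑_{l=1}^r x_l ∏_{j≠l} ((x_j − x_l + 1)(x_j + x_l)) / ((x_j − x_l)(x_j + x_l − 1)) holds. -/
/-!
Put `u i = x i ^ 2 + x i` and `v i = x i ^ 2 - x i`, so that `v l - u l = -2 x l`,
`v l - u j = -(x j - x l + 1)(x j + x l)` and `v l - v j = -(x j - x l)(x j + x l - 1)`.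
The polynomial `∏ (X - u j) - ∏ (X - v j)` has degree `< r` and its `X ^ (r - 1)`-coefficient is
`∑ v - ∑ u = -2 ∑ x`. The hypotheses make the `v j` distinct, so this coefficient is also
given by Lagrange interpolation at the nodes `v l`, where the polynomial takes the value
`∏ j (v l - u j)`.
Comparing the two expressions and dividing by `-2` gives the identity.
-/

open Finset Polynomial

namespace Lagrange

variable {R : Type*} [CommRing R] {ι : Type*} (s : Finset ι) (u v : ι → R)

theorem coeff_nodal_sub_nodal :
    (nodal s u - nodal s v).coeff (#s - 1) = ∑ i ∈ s, v i - ∑ i ∈ s, u i := by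
  rcases s.eq_empty_or_nonempty with rfl | hs
  · simp
  · rw [coeff_sub, nodal, nodal, prod_X_sub_C_coeff_card_pred s u hs.card_pos,
      prod_X_sub_C_coeff_card_pred s v hs.card_pos, neg_sub_neg]

theorem degree_nodal_sub_nodal_lt [Nontrivial R] : (nodal s u - nodal s v).degree < #s := by
  have h := degree_sub_lt_left (p := nodal s u) (q := nodal s v)
    (by rw [degree_nodal, degree_nodal]) nodal_ne_zero
    (by rw [nodal_monic.leadingCoeff, nodal_monic.leadingCoeff])
  rwa [degree_nodal] at h

theorem eval_nodal_sub_nodal_at_node {i : ι} (hi : i ∈ s) :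
    (nodal s u - nodal s v).eval (v i) = ∏ j ∈ s, (v i - u j) := by
  rw [eval_sub, eval_nodal, eval_nodal_at_node hi, sub_zero]

end Lagrange

open Lagrange in
theorem sum_sub_eq_sum_mul_prod_div {F : Type*} [Field F] {ι : Type*} [DecidableEq ι]
    (s : Finset ι) (u v : ι → F) (hv : Set.InjOn v s) :
    ∑ i ∈ s, (v i - u i) =
      ∑ i ∈ s, (v i - u i) * ∏ j ∈ s.erase i, (v i - u j) / (v i - v j) := by
  rw [sum_sub_distrib, ← coeff_nodal_sub_nodal, coeff_eq_sum hv (degree_nodal_sub_nodal_lt s u v)]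
  refine sum_congr rfl fun i hi => ?_
  rw [eval_nodal_sub_nodal_at_node s u v hi, ← mul_prod_erase s _ hi, prod_div_distrib,
    mul_div_assoc]

theorem injective_sq_sub_self {R : Type*} [CommRing R] [NoZeroDivisors R] {ι : Type*}
    {x : ι → R} (hx : Function.Injective x) (h1 : ∀ j l, j ≠ l → x j + x l ≠ 1) :
    Function.Injective fun i => x i ^ 2 - x i := by
  intro j l hjl
  by_contra hne
  have hprod : (x j - x l) * (x j + x l - 1) = 0 := by linear_combination hjl
  rcases mul_eq_zero.1 hprod with h | h
  · exact hne (hx (sub_eq_zero.1 h))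
  · exact h1 j l hne (sub_eq_zero.1 h)

theorem sum_lemma_general {F : Type*} [Field F] [CharZero F] (r : ℕ)
    (x : Fin r → F) (hx : Function.Injective x)
    (h1 : ∀ j l, j ≠ l → x j + x l ≠ 1) :
    ∑ i, x i = ∑ l, x l * ∏ j ∈ univ.erase l,
      ((x j - x l + 1) * (x j + x l)) / ((x j - x l) * (x j + x l - 1)) := by
  have key := sum_sub_eq_sum_mul_prod_div univ (fun i => x i ^ 2 + x i) (fun i => x i ^ 2 - x i)
    (injective_sq_sub_self hx h1).injOn
  have hdiag : ∀ i, x i ^ 2 - x i - (x i ^ 2 + x i) = -2 * x i := fun i => by ring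
  have hratio : ∀ l j, (x l ^ 2 - x l - (x j ^ 2 + x j)) / (x l ^ 2 - x l - (x j ^ 2 - x j))
      = ((x j - x l + 1) * (x j + x l)) / ((x j - x l) * (x j + x l - 1)) := fun l j => by
    rw [← neg_div_neg_eq]; ring_nf
  simp only [hdiag, hratio, mul_assoc, ← mul_sum] at key
  exact mul_left_cancel₀ (by norm_num) key

/-- **Sum Lemma.** -/
theorem sum_lemma {F : Type*} [Field F] [CharZero F] (r : ℕ) (hr : 0 < r)
    (x : Fin r → F) (hx : Function.Injective x)
    (h1 : ∀ j l, j ≠ l → x j + x l ≠ 1) :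
    ∑ i, x i = ∑ l, x l * ∏ j ∈ univ.erase l,
      ((x j - x l + 1) * (x j + x l)) / ((x j - x l) * (x j + x l - 1)) :=
  sum_lemma_general r x hx h1
end

section
/- For every r ≥ 1 and variables x_1,…,x_r, y_1,…,y_r with x_i ≠ x_j and y_i ≠ y_j for i ≠ j, x_i ≠ −1, y_i ≠ −1, and x_i + y_j ≠ −2 for all i, j, the identity (∏_k x_k · ∏_k y_k)/(∏_k (x_k+1) · ∏_k (y_k+1)) = 1 − ∑_{l=1}^r 1/(x_l+1) · ∏_{k=1}^r (x_l + y_k + 1)/(x_l + y_k + 2) · ∏_{k≠l} (x_k − x_l − 1)/(x_k − x_l) − ∑_{l=1}^r 1/(y_l+1) · ∏_{k=1}^r (y_l + x_k + 1)/(y_l + x_k + 2) · ∏_{k≠l} (y_k − y_l − 1)/(y_k − y_l) holds. -/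
/-!
The polynomial `Q = ∏ (X - x k) * ∏ (X + y k)` is monic of degree `2r`, so Lagrange interpolation
at the `2r + 1` distinct nodes `0`, `x l + 1`, `-(y l + 1)` expresses its leading coefficient as
`1 = ∑ₐ Q(a) / ∏_{b ≠ a} (a - b)`. The node `0` contributes the left-hand side, and the nodes
`x l + 1` and `-(y l + 1)` contribute the summands of the two sums.
-/

open Finset Polynomial

namespace Fintype

variable {α β M : Type*} [CommMonoid M] [Fintype α] [Fintype β] [DecidableEq α] [DecidableEq β]

theorem prod_erase_none (f : Option α → M) :
    ∏ o ∈ univ.erase none, f o = ∏ a, f (some a) := by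
  rw [show univ.erase none = univ.map .some by ext (_ | a) <;> simp, prod_map]
  rfl

theorem prod_erase_some (f : Option α → M) (a : α) :
    ∏ o ∈ univ.erase (some a), f o = f none * ∏ b ∈ univ.erase a, f (some b) := by
  rw [show univ.erase (some a) = insertNone (univ.erase a) by ext (_ | b) <;> simp,
    prod_insertNone]

theorem prod_erase_inl (f : α ⊕ β → M) (a : α) :
    ∏ s ∈ univ.erase (.inl a), f s = (∏ b ∈ univ.erase a, f (.inl b)) * ∏ c, f (.inr c) := by
  rw [show univ.erase (.inl a) = (univ.erase a).disjSum univ by ext (b | c) <;> simp,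
    prod_disjSum]

theorem prod_erase_inr (f : α ⊕ β → M) (c : β) :
    ∏ s ∈ univ.erase (.inr c), f s = (∏ a, f (.inl a)) * ∏ d ∈ univ.erase c, f (.inr d) := by
  rw [show univ.erase (.inr c) = univ.disjSum (univ.erase c) by ext (b | d) <;> simp,
    prod_disjSum]

end Fintype

theorem Finset.prod_div_prod_erase {ι M : Type*} [DivisionCommMonoid M] [DecidableEq ι]
    {s : Finset ι} {a : ι} {f g : ι → M} (h : a ∈ s) :
    (∏ k ∈ s, f k) / ∏ k ∈ s.erase a, g k = f a * ∏ k ∈ s.erase a, f k / g k := by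
  rw [← mul_prod_erase s f h, prod_div_distrib, mul_div_assoc]

namespace DoubleProduct

variable {F ι : Type*} [Field F] (x y : ι → F)

def node : Option (ι ⊕ ι) → F
  | none => 0
  | some (.inl l) => x l + 1
  | some (.inr l) => -(y l + 1)

variable {x y} in
theorem node_injective (hx : Function.Injective x) (hy : Function.Injective y)
    (hx1 : ∀ i, x i ≠ -1) (hy1 : ∀ i, y i ≠ -1) (hxy : ∀ i j, x i + y j ≠ -2) :
    Function.Injective (node x y) := by
  rintro (_ | a | a) (_ | b | b) h <;> simp only [node] at h
  · rfl
  · exact absurd (by linear_combination -h) (hx1 b)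
  · exact absurd (by linear_combination h) (hy1 b)
  · exact absurd (by linear_combination h) (hx1 a)
  · rw [hx (add_right_cancel h)]
  · exact absurd (by linear_combination h) (hxy a b)
  · exact absurd (by linear_combination -h) (hy1 a)
  · exact absurd (by linear_combination -h) (hxy b a)
  · rw [hy (add_right_cancel (neg_inj.mp h))]

variable [Fintype ι]

noncomputable def poly : F[X] := (∏ k, (X - C (x k))) * ∏ k, (X + C (y k))

theorem eval_poly (t : F) : (poly x y).eval t = (∏ k, (t - x k)) * ∏ k, (t + y k) := by
  simp [poly, eval_prod]

theorem poly_monic : (poly x y).Monic :=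
  (monic_prod_of_monic _ _ fun k _ => monic_X_sub_C (x k)).mul
    (monic_prod_of_monic _ _ fun k _ => monic_X_add_C (y k))

theorem natDegree_poly : (poly x y).natDegree = Fintype.card ι + Fintype.card ι := by
  rw [poly, (monic_prod_of_monic _ _ fun k _ => monic_X_sub_C (x k)).natDegree_mul
    (monic_prod_of_monic _ _ fun k _ => monic_X_add_C (y k)),
    natDegree_prod_of_monic _ _ fun k _ => monic_X_sub_C (x k),
    natDegree_prod_of_monic _ _ fun k _ => monic_X_add_C (y k)]
  simp

variable [DecidableEq ι]

noncomputable def lagrangeTerm (o : Option (ι ⊕ ι)) : F :=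
  (poly x y).eval (node x y o) / ∏ j ∈ univ.erase o, (node x y o - node x y j)

theorem sum_lagrangeTerm (h : Function.Injective (node x y)) : ∑ o, lagrangeTerm x y o = 1 := by
  rw [← (poly_monic x y).leadingCoeff, Lagrange.leadingCoeff_eq_sum h.injOn]
  · rfl
  · rw [degree_eq_natDegree (poly_monic x y).ne_zero, natDegree_poly]
    simp

theorem lagrangeTerm_none :
    lagrangeTerm x y none = ((∏ k, x k) * ∏ k, y k) / ((∏ k, (x k + 1)) * ∏ k, (y k + 1)) := by
  rw [lagrangeTerm, eval_poly, Fintype.prod_erase_none, Fintype.prod_sum_type,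
    ← div_mul_div_comm, ← div_mul_div_comm, ← prod_div_distrib, ← prod_div_distrib,
    ← prod_div_distrib, ← prod_div_distrib]
  congr 1 <;> refine prod_congr rfl fun k _ => ?_ <;> simp only [node]
  · rw [zero_sub, zero_sub, neg_div_neg_eq]
  · rw [zero_add, zero_sub, neg_neg]

theorem lagrangeTerm_inl (l : ι) :
    lagrangeTerm x y (some (.inl l)) = 1 / (x l + 1) * (∏ k, (x l + y k + 1) / (x l + y k + 2)) *
      ∏ k ∈ univ.erase l, (x k - x l - 1) / (x k - x l) := by
  rw [lagrangeTerm, eval_poly, Fintype.prod_erase_some, Fintype.prod_erase_inl]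
  simp only [node]
  rw [show ∀ a b d e c : F, a * b / (d * (e * c)) = 1 / d * (b / c) * (a / e) by intros; ring,
    ← prod_div_distrib, prod_div_prod_erase (mem_univ l), sub_zero, add_sub_cancel_left, one_mul]
  congr 2
  · exact prod_congr rfl fun k _ => by congr 1 <;> ring
  · ext k; rw [← neg_div_neg_eq]; congr 1 <;> ring

theorem lagrangeTerm_inr (l : ι) :
    lagrangeTerm x y (some (.inr l)) = 1 / (y l + 1) * (∏ k, (y l + x k + 1) / (y l + x k + 2)) *
      ∏ k ∈ univ.erase l, (y k - y l - 1) / (y k - y l) := by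
  rw [lagrangeTerm, eval_poly, Fintype.prod_erase_some, Fintype.prod_erase_inr]
  simp only [node]
  rw [show ∀ a b d c e : F, a * b / (d * (c * e)) = 1 / d * (a / c) * (b / e) by intros; ring,
    ← prod_div_distrib, prod_div_prod_erase (mem_univ l),
    show ∀ d p m q : F, 1 / d * p * (m * q) = m / d * p * q by intros; ring]
  congr 2
  · rw [← neg_div_neg_eq]; congr 1 <;> ring
  · exact prod_congr rfl fun k _ => by rw [← neg_div_neg_eq]; congr 1 <;> ring
  · ext k; congr 1 <;> ring

end DoubleProduct

theorem double_product_lemma_general {F : Type*} [Field F] (r : ℕ)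
    (x y : Fin r → F) (hx : Function.Injective x) (hy : Function.Injective y)
    (hx1 : ∀ i, x i ≠ -1) (hy1 : ∀ i, y i ≠ -1)
    (hxy : ∀ i j, x i + y j ≠ -2) :
    ((∏ k, x k) * ∏ k, y k) / ((∏ k, (x k + 1)) * ∏ k, (y k + 1)) =
      1 - (∑ l, 1 / (x l + 1) * (∏ k, (x l + y k + 1) / (x l + y k + 2)) *
            ∏ k ∈ univ.erase l, (x k - x l - 1) / (x k - x l))
        - ∑ l, 1 / (y l + 1) * (∏ k, (y l + x k + 1) / (y l + x k + 2)) *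
            ∏ k ∈ univ.erase l, (y k - y l - 1) / (y k - y l) := by
  have h := DoubleProduct.sum_lagrangeTerm x y (DoubleProduct.node_injective hx hy hx1 hy1 hxy)
  simp only [Fintype.sum_option, Fintype.sum_sum_type, DoubleProduct.lagrangeTerm_none,
    DoubleProduct.lagrangeTerm_inl, DoubleProduct.lagrangeTerm_inr] at h
  linear_combination h

/-- **Double Product Lemma.** -/
theorem double_product_lemma {F : Type*} [Field F] [CharZero F] (r : ℕ) (hr : 1 ≤ r)
    (x y : Fin r → F) (hx : Function.Injective x) (hy : Function.Injective y)
    (hx1 : ∀ i, x i ≠ -1) (hy1 : ∀ i, y i ≠ -1)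
    (hxy : ∀ i j, x i + y j ≠ -2) :
    ((∏ k, x k) * ∏ k, y k) / ((∏ k, (x k + 1)) * ∏ k, (y k + 1)) =
      1 - (∑ l, 1 / (x l + 1) * (∏ k, (x l + y k + 1) / (x l + y k + 2)) *
            ∏ k ∈ univ.erase l, (x k - x l - 1) / (x k - x l))
        - ∑ l, 1 / (y l + 1) * (∏ k, (y l + x k + 1) / (y l + x k + 2)) *
            ∏ k ∈ univ.erase l, (y k - y l - 1) / (y k - y l) :=
  double_product_lemma_general r x y hx hy hx1 hy1 hxy
end

section
/- For every positive integer r and pairwise distinct variables x_1,…,x_r with x_j + x_l ≠ −3 for j ≠ l, the identity x_1 ⋯ x_r = ∏_{j=1}^r (x_j + 2) − 2 ∑_{l=1}^r ∏_{j≠l} ((x_j + 2)(x_j − x_l − 1)(x_j + x_l + 2)) / ((x_j − x_l)(x_j + x_l + 3)) holds. -/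
/-!
Put `s_j = (x_j + 1)(x_j + 2)` and `c_j = x_j (x_j + 1)`. Since
`s_l - s_j = -(x_j - x_l)(x_j + x_l + 3)`, the nodes `s_j` are distinct, and the polynomial
`∏ (X - c_j) - ∏ (X - s_j)` of degree `< r` equals its Lagrange interpolant on them.
Evaluated at `0`, using `s_l - c_j = -(x_j - x_l - 1)(x_j + x_l + 2)`, this is the identity
multiplied by `∏ -(x_j + 1)`. If instead `x_k = -1` for some `k`, the `k`-th summand is
`∏_{j ≠ k} x_j` and the `j = k` factor of every other summand is `1`, which reduces the identity
to the one for the remaining variables.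
-/

open Finset Polynomial

namespace Lagrange

theorem eval_eq_sum_mul_prod_div {F ι : Type*} [Field F] [DecidableEq ι]
    {A : Finset ι} {s : ι → F} (hs : Set.InjOn s A) {f : F[X]} (hf : f.degree < #A) (t : F) :
    f.eval t = ∑ l ∈ A, f.eval (s l) * ∏ j ∈ A.erase l, (t - s j) / (s l - s j) := by
  conv_lhs => rw [eq_interpolate hs hf]
  simp [interpolate_apply, eval_finsetSum, Lagrange.basis, eval_prod, basisDivisor,
    div_eq_inv_mul]

theorem degree_nodal_sub_nodal_lt_s3 {R ι : Type*} [CommRing R] [Nontrivial R]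
    (A : Finset ι) (c s : ι → R) : (nodal A c - nodal A s).degree < #A := by
  rcases A.eq_empty_or_nonempty with rfl | hA
  · simp
  · rw [← degree_nodal (v := c)]
    exact degree_sub_lt_left (by rw [degree_nodal, degree_nodal]) nodal_ne_zero
      (by rw [nodal_monic.leadingCoeff, nodal_monic.leadingCoeff])

theorem prod_sub_sub_prod_sub_eq_sum {F ι : Type*} [Field F] [DecidableEq ι]
    {A : Finset ι} {s : ι → F} (hs : Set.InjOn s A) (c : ι → F) (t : F) :
    ∏ j ∈ A, (t - c j) - ∏ j ∈ A, (t - s j) =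
      ∑ l ∈ A, (∏ j ∈ A, (s l - c j)) * ∏ j ∈ A.erase l, (t - s j) / (s l - s j) := by
  have h := eval_eq_sum_mul_prod_div hs (degree_nodal_sub_nodal_lt_s3 A c s) t
  simp only [eval_sub, eval_nodal] at h
  rw [h]
  refine sum_congr rfl fun l hl ↦ ?_
  rw [prod_eq_zero (f := fun j ↦ s l - s j) hl (sub_self _), sub_zero]

end Lagrange

namespace ProductLemma

variable {F ι : Type*} [Field F] [DecidableEq ι] {A : Finset ι} {x : ι → F}

def factor (a b : F) : F :=
  ((a + 2) * (a - b - 1) * (a + b + 2)) / ((a - b) * (a + b + 3))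

theorem factor_neg_one_right {a : F} (h1 : a + 1 ≠ 0) (h2 : a + 2 ≠ 0) :
    factor a (-1) = a := by
  have hden : (a - -1) * (a + -1 + 3) = (a + 1) * (a + 2) := by ring
  rw [factor, hden]
  field_simp
  ring

theorem factor_neg_one_left {b : F} (h1 : b + 1 ≠ 0) (h2 : b + 2 ≠ 0) :
    factor (-1) b = 1 := by
  have hden : (-1 - b) * (-1 + b + 3) = -((b + 1) * (b + 2)) := by ring
  rw [factor, hden]
  field_simp
  ring

theorem node_sub_mul_div_eq {a b : F} (hab : a - b ≠ 0) (h3 : a + b + 3 ≠ 0) :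
    ((b + 1) * (b + 2) - a * (a + 1)) * ((0 - (a + 1) * (a + 2)) /
      ((b + 1) * (b + 2) - (a + 1) * (a + 2))) = -(a + 1) * factor a b := by
  have hden : (b + 1) * (b + 2) - (a + 1) * (a + 2) = -((a - b) * (a + b + 3)) := by ring
  rw [factor, hden]
  field_simp
  ring

theorem injOn_node (hx : Set.InjOn x A) (h3 : ∀ j ∈ A, ∀ l ∈ A, j ≠ l → x j + x l ≠ -3) :
    Set.InjOn (fun j ↦ (x j + 1) * (x j + 2)) A := by
  intro j hj l hl h
  by_contra hjl
  have : (x j - x l) * (x j + x l + 3) = 0 := by linear_combination h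
  rcases mul_eq_zero.1 this with h | h
  · exact hjl (hx hj hl (sub_eq_zero.1 h))
  · exact h3 j hj l hl hjl (by linear_combination h)

theorem prod_eq_of_ne_neg_one (hx : Set.InjOn x A)
    (h3 : ∀ j ∈ A, ∀ l ∈ A, j ≠ l → x j + x l ≠ -3) (h1 : ∀ j ∈ A, x j + 1 ≠ 0) :
    ∏ j ∈ A, x j = (∏ j ∈ A, (x j + 2)) - 2 * ∑ l ∈ A, ∏ j ∈ A.erase l, factor (x j) (x l) := by
  have key := Lagrange.prod_sub_sub_prod_sub_eq_sum (injOn_node hx h3) (fun j ↦ x j * (x j + 1)) 0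
  set M := ∏ j ∈ A, -(x j + 1)
  have hM : M ≠ 0 := prod_ne_zero_iff.2 fun j hj ↦ neg_ne_zero.2 (h1 j hj)
  have hlhs : ∏ j ∈ A, (0 - x j * (x j + 1)) - ∏ j ∈ A, (0 - (x j + 1) * (x j + 2)) =
      M * ((∏ j ∈ A, x j) - ∏ j ∈ A, (x j + 2)) := by
    rw [mul_sub, ← prod_mul_distrib, ← prod_mul_distrib]
    congr 1 <;> exact prod_congr rfl fun j _ ↦ by ring
  have hterm : ∀ l ∈ A, (∏ j ∈ A, ((x l + 1) * (x l + 2) - x j * (x j + 1))) *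
      ∏ j ∈ A.erase l, (0 - (x j + 1) * (x j + 2)) / ((x l + 1) * (x l + 2) - (x j + 1) * (x j + 2))
      = -2 * M * ∏ j ∈ A.erase l, factor (x j) (x l) := by
    intro l hl
    have hfactor : ∀ j ∈ A.erase l, ((x l + 1) * (x l + 2) - x j * (x j + 1)) *
        ((0 - (x j + 1) * (x j + 2)) / ((x l + 1) * (x l + 2) - (x j + 1) * (x j + 2))) =
        -(x j + 1) * factor (x j) (x l) := by
      intro j hj
      have hjl := ne_of_mem_erase hj
      have hjA := mem_of_mem_erase hj
      refine node_sub_mul_div_eq (sub_ne_zero.2 fun h ↦ hjl (hx hjA hl h)) fun h ↦ ?_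
      exact h3 j hjA l hl hjl (by linear_combination h)
    rw [← mul_prod_erase A _ hl, mul_assoc, ← prod_mul_distrib, prod_congr rfl hfactor,
      prod_mul_distrib, show M = _ from (mul_prod_erase A (fun j ↦ -(x j + 1)) hl).symm]
    ring
  rw [hlhs, sum_congr rfl hterm, ← mul_sum] at key
  apply mul_left_cancel₀ hM
  linear_combination key

theorem add_one_ne_zero_and_add_two_ne_zero (hx : Set.InjOn x A)
    (h3 : ∀ j ∈ A, ∀ l ∈ A, j ≠ l → x j + x l ≠ -3) {k : ι} (hk : k ∈ A) (hxk : x k = -1)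
    {j : ι} (hj : j ∈ A.erase k) : x j + 1 ≠ 0 ∧ x j + 2 ≠ 0 := by
  have hjk := ne_of_mem_erase hj
  have hjA := mem_of_mem_erase hj
  refine ⟨fun h ↦ hjk (hx hjA hk ?_), fun h ↦ h3 j hjA k hk hjk ?_⟩
  · linear_combination h - hxk
  · linear_combination h + hxk

theorem sum_prod_factor_of_eq_neg_one (hx : Set.InjOn x A)
    (h3 : ∀ j ∈ A, ∀ l ∈ A, j ≠ l → x j + x l ≠ -3) {k : ι} (hk : k ∈ A) (hxk : x k = -1) :
    ∑ l ∈ A, ∏ j ∈ A.erase l, factor (x j) (x l) =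
      ∏ j ∈ A.erase k, x j + ∑ l ∈ A.erase k, ∏ j ∈ (A.erase k).erase l, factor (x j) (x l) := by
  have hne := fun j (hj : j ∈ A.erase k) ↦ add_one_ne_zero_and_add_two_ne_zero hx h3 hk hxk hj
  rw [← add_sum_erase A _ hk]
  congr 1
  · refine prod_congr rfl fun j hj ↦ ?_
    rw [hxk]
    exact factor_neg_one_right (hne j hj).1 (hne j hj).2
  · refine sum_congr rfl fun l hl ↦ ?_
    rw [← mul_prod_erase (A.erase l) _ (mem_erase.2 ⟨(ne_of_mem_erase hl).symm, hk⟩),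
      erase_right_comm, hxk, factor_neg_one_left (hne l hl).1 (hne l hl).2, one_mul]

theorem prod_eq_prod_add_two_sub_two_mul_sum (hx : Set.InjOn x A)
    (h3 : ∀ j ∈ A, ∀ l ∈ A, j ≠ l → x j + x l ≠ -3) :
    ∏ j ∈ A, x j = (∏ j ∈ A, (x j + 2)) - 2 * ∑ l ∈ A, ∏ j ∈ A.erase l, factor (x j) (x l) := by
  by_cases h : ∃ k ∈ A, x k = -1
  · obtain ⟨k, hk, hxk⟩ := h
    have hrest := prod_eq_of_ne_neg_one (hx.mono (erase_subset k A))
      (fun j hj l hl ↦ h3 j (mem_of_mem_erase hj) l (mem_of_mem_erase hl))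
      (fun j hj ↦ (add_one_ne_zero_and_add_two_ne_zero hx h3 hk hxk hj).1)
    rw [sum_prod_factor_of_eq_neg_one hx h3 hk hxk, ← mul_prod_erase A x hk,
      ← mul_prod_erase A (fun j ↦ x j + 2) hk, hxk]
    linear_combination hrest
  · push Not at h
    exact prod_eq_of_ne_neg_one hx h3 fun j hj h' ↦ h j hj (by linear_combination h')

end ProductLemma

theorem product_lemma_general {F : Type*} [Field F] (r : ℕ)
    (x : Fin r → F) (hx : Function.Injective x)
    (h3 : ∀ j l, j ≠ l → x j + x l ≠ -3) :
    ∏ j, x j = (∏ j, (x j + 2)) - 2 * ∑ l, ∏ j ∈ univ.erase l,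
      ((x j + 2) * (x j - x l - 1) * (x j + x l + 2)) / ((x j - x l) * (x j + x l + 3)) :=
  ProductLemma.prod_eq_prod_add_two_sub_two_mul_sum hx.injOn fun j _ l _ ↦ h3 j l

/-- **Product Lemma.** -/
theorem product_lemma {F : Type*} [Field F] [CharZero F] (r : ℕ) (hr : 0 < r)
    (x : Fin r → F) (hx : Function.Injective x)
    (h3 : ∀ j l, j ≠ l → x j + x l ≠ -3) :
    ∏ j, x j = (∏ j, (x j + 2)) - 2 * ∑ l, ∏ j ∈ univ.erase l,
      ((x j + 2) * (x j - x l - 1) * (x j + x l + 2)) / ((x j - x l) * (x j + x l + 3)) :=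
  product_lemma_general r x hx h3
end

section
/- Let I = {i_1 < ⋯ < i_r} ⊂ ℕ with i_1 = 0 and i_1 > 0 not required; suppose the Lascoux polynomials satisfy the first recurrence LP_I(n) = (n − r + 1) LP_{I∖{0}}(n) − 2 ∑_{l>1, i_{l+1} > i_l + 1} LP_{I∪{i_l+1}∖{0,i_l}}(n). If for each set J appearing on the right-hand side, LP_J is a polynomial of degree |J| + ∑J with leading coefficient ∏_{j>k}(j_j − j_k)/(∏_k (j_k+1)! · ∏_{j>k}(j_j + j_k + 2)), then LP_I is a polynomial of degree |I| + ∑I with leading coefficient ∏_{j>k}(i_j − i_k)/(∏_k (i_k+1)! · ∏_{j>k}(i_j + i_k + 2)). -/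
open Finset

/-- `f : ℕ → ℚ` eventually agrees with a polynomial of degree `d` and leading
coefficient `c`. -/
def IsPolyWithLead (f : ℕ → ℚ) (d : ℕ) (c : ℚ) : Prop :=
  ∃ p : Polynomial ℚ, (∀ᶠ n in Filter.atTop, f n = p.eval (n : ℚ)) ∧
    p.natDegree = d ∧ p.leadingCoeff = c

/-- The claimed leading coefficient of the type C Lascoux polynomial of a set `I`. -/
noncomputable def leadC (I : Finset ℕ) : ℚ :=
  (∏ p ∈ (I ×ˢ I).filter (fun p => p.2 < p.1), ((p.1 : ℚ) - (p.2 : ℚ))) /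
    ((∏ i ∈ I, (Nat.factorial (i + 1) : ℚ)) *
      ∏ p ∈ (I ×ˢ I).filter (fun p => p.2 < p.1), ((p.1 : ℚ) + (p.2 : ℚ) + 2))

/-!
Write `S = I.erase 0` and `d = #S + ∑ S`. By the recurrence, `LP I` is eventually a polynomial
of degree at most `d + 1` whose coefficient of `X ^ (d + 1)` is `leadC S - 2 ∑_J leadC J`, so
everything reduces to the identity `leadC I = leadC S - 2 ∑_J leadC J` (and `leadC I > 0` then
pins the degree).

After division by `leadC S` this identity is Lagrange interpolation of the monic polynomial
`∏_{b ∈ S} (X - b (b + 1))` at the nodes `k (k + 1)`, `k ∈ {0} ∪ (S + 1)`: the values divided by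
the nodal weights sum to the leading coefficient `1`. The node `0` contributes `leadC I / leadC S`;
the node `(i + 1) (i + 2)`, `i ∈ S`, contributes `2 leadC J / leadC S` with
`J = insert (i + 1) (S.erase i)` when `i + 1 ∉ S`, and nothing when `i + 1 ∈ S`, since it is then
a root.
-/

open Polynomial Filter

section PairProducts

variable {α M : Type*} [LinearOrder α] [CommMonoid M]

theorem prod_filter_lt_insert_of_symm {f : α → α → M} (hf : ∀ x y, f x y = f y x)
    {a : α} {A : Finset α} (ha : a ∉ A) :
    ∏ p ∈ (insert a A ×ˢ insert a A).filter (fun p => p.2 < p.1), f p.1 p.2 =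
      (∏ b ∈ A, f a b) * ∏ p ∈ (A ×ˢ A).filter (fun p => p.2 < p.1), f p.1 p.2 := by
  have hpair : ∀ b ∈ A, (if b < a then f a b else 1) * (if a < b then f b a else 1) = f a b := by
    intro b hb
    rcases lt_or_gt_of_ne (ne_of_mem_of_not_mem hb ha) with h | h
    · simp [h, h.not_gt]
    · simp [h, h.not_gt, hf b a]
  simp only [prod_filter, prod_product, prod_insert ha, lt_irrefl, if_false, one_mul,
    prod_mul_distrib, ← mul_assoc, ← prod_congr rfl hpair]

end PairProducts

theorem prod_filter_lt_sub_eq_prod_abs (A : Finset ℕ) :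
    ∏ p ∈ (A ×ˢ A).filter (fun p => p.2 < p.1), ((p.1 : ℚ) - p.2) =
      ∏ p ∈ (A ×ˢ A).filter (fun p => p.2 < p.1), |(p.1 : ℚ) - p.2| :=
  prod_congr rfl fun p hp => (abs_of_pos (sub_pos.2 (by exact_mod_cast (mem_filter.1 hp).2))).symm

theorem leadC_pos (A : Finset ℕ) : 0 < leadC A := by
  unfold leadC
  refine div_pos (prod_pos fun p hp => ?_) (by positivity)
  exact sub_pos.2 (by exact_mod_cast (mem_filter.1 hp).2)

theorem leadC_insert {a : ℕ} {A : Finset ℕ} (ha : a ∉ A) :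
    leadC (insert a A) =
      leadC A / (a + 1).factorial * ∏ b ∈ A, (|(a : ℚ) - b| / (a + b + 2)) := by
  unfold leadC
  rw [prod_filter_lt_sub_eq_prod_abs, prod_filter_lt_sub_eq_prod_abs,
    prod_filter_lt_insert_of_symm (f := fun x y : ℕ => |(x : ℚ) - y|)
      (fun x y => abs_sub_comm _ _) ha,
    prod_filter_lt_insert_of_symm (f := fun x y : ℕ => (x : ℚ) + y + 2) (fun x y => by ring) ha,
    prod_insert ha, prod_div_distrib]
  have : ∏ b ∈ A, ((a : ℚ) + b + 2) ≠ 0 := prod_ne_zero_iff.2 fun b _ => by positivity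
  have : ∏ p ∈ (A ×ˢ A).filter (fun p => p.2 < p.1), ((p.1 : ℚ) + p.2 + 2) ≠ 0 :=
    prod_ne_zero_iff.2 fun b _ => by positivity
  have : ∏ i ∈ A, ((i + 1).factorial : ℚ) ≠ 0 := prod_ne_zero_iff.2 fun b _ => by positivity
  have : ((a + 1).factorial : ℚ) ≠ 0 := by positivity
  field_simp

def pronic (n : ℕ) : ℚ := n * (n + 1)

theorem pronic_strictMono : StrictMono pronic := fun m n h => by
  have : (m : ℚ) < n := by exact_mod_cast h
  unfold pronic; nlinarith [m.cast_nonneg (α := ℚ)]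

theorem pronic_sub_pronic (m n : ℕ) : pronic m - pronic n = (m - n) * (m + n + 1) := by
  unfold pronic; ring

theorem leadC_insert_zero {S : Finset ℕ} (h : 0 ∉ S) :
    leadC (insert 0 S) = leadC S * ∏ b ∈ S, pronic b / pronic (b + 1) := by
  rw [leadC_insert h]
  simp only [zero_add, Nat.factorial_one, Nat.cast_one, div_one, CharP.cast_eq_zero, zero_sub,
    abs_neg, Nat.abs_cast]
  congr 1
  refine prod_congr rfl fun b _ => ?_
  unfold pronic
  push_cast
  field_simp
  ring

theorem abs_sub_mul_add_one_sub (i b : ℕ) :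
    |(i : ℚ) - b| * (i + 1 - b) = |(i : ℚ) + 1 - b| * (i - b) := by
  rcases le_or_gt b i with h | h
  · have : (b : ℚ) ≤ i := by exact_mod_cast h
    rw [abs_of_nonneg (by linarith), abs_of_nonneg (by linarith)]; ring
  · have : (i : ℚ) + 1 ≤ b := by exact_mod_cast h
    rw [abs_of_nonpos (by linarith), abs_of_nonpos (by linarith)]; ring

theorem leadC_insert_succ {i : ℕ} {T : Finset ℕ} (hi : i ∉ T) (hi1 : i + 1 ∉ T) :
    2 * leadC (insert (i + 1) T) = leadC (insert i T) *
      ((∏ b ∈ insert i T, (pronic (i + 1) - pronic b)) /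
        (pronic (i + 1) * ∏ b ∈ T, (pronic (i + 1) - pronic (b + 1)))) := by
  have hfactor : (∏ b ∈ T, |(i : ℚ) - b| / (i + b + 2)) *
      ((∏ b ∈ T, (pronic (i + 1) - pronic b)) / ∏ b ∈ T, (pronic (i + 1) - pronic (b + 1))) =
      ∏ b ∈ T, (|((i + 1 : ℕ) : ℚ) - b| / ((i + 1 : ℕ) + b + 2)) := by
    rw [← prod_div_distrib, ← prod_mul_distrib]
    refine prod_congr rfl fun b hb => ?_
    have hib : (i : ℚ) - b ≠ 0 := sub_ne_zero.2 (mod_cast (ne_of_mem_of_not_mem hb hi).symm)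
    have := abs_sub_mul_add_one_sub i b
    rw [pronic_sub_pronic, pronic_sub_pronic]
    push_cast
    rw [show (i : ℚ) + 1 - (b + 1) = i - b by ring]
    field_simp
    linear_combination (↑i + ↑b + 2) * (↑i + ↑b + 3) * this
  rw [leadC_insert hi, leadC_insert hi1, prod_insert hi, ← hfactor, Nat.factorial_succ (i + 1)]
  unfold pronic
  push_cast
  field_simp
  ring

open Lagrange in
theorem leadC_eq_sub_sum {I : Finset ℕ} (h0 : 0 ∈ I) :
    leadC I = leadC (I.erase 0) -
      2 * ∑ i ∈ (I.erase 0).filter (fun i => i + 1 ∉ I),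
        leadC (insert (i + 1) ((I.erase 0).erase i)) := by
  set S := I.erase 0
  have hS : insert 0 S = I := insert_erase h0
  have hsucc_inj : Function.Injective (· + 1 : ℕ → ℕ) := add_left_injective 1
  have h0S : (0 : ℕ) ∉ S.image (· + 1) := by simp
  set s := insert 0 (S.image (· + 1))
  have hcard : (#s : WithBot ℕ) = (nodal S pronic).degree + 1 := by
    rw [degree_nodal, card_insert_of_notMem h0S, card_image_of_injective _ hsucc_inj]; rfl
  -- `1 = ∑ₖ (nodal S pronic).eval (pronic k) / ∏_{l ∈ s.erase k} (pronic k - pronic l)`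
  have hL := leadingCoeff_eq_sum pronic_strictMono.injective.injOn hcard
  rw [nodal_monic.leadingCoeff, sum_insert h0S, sum_image fun _ _ _ _ h => hsucc_inj h,
    erase_insert h0S] at hL
  simp only [eval_nodal] at hL
  have hzero : (∏ b ∈ S, (pronic 0 - pronic b)) / ∏ j ∈ S.image (· + 1), (pronic 0 - pronic j) =
      ∏ b ∈ S, pronic b / pronic (b + 1) := by
    rw [prod_image fun _ _ _ _ h => hsucc_inj h, ← prod_div_distrib]
    exact prod_congr rfl fun b _ => by simp [pronic]
  have hterm : ∀ i ∈ S, leadC S * ((∏ b ∈ S, (pronic (i + 1) - pronic b)) /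
      ∏ j ∈ s.erase (i + 1), (pronic (i + 1) - pronic j)) =
        if i + 1 ∈ I then 0 else 2 * leadC (insert (i + 1) (S.erase i)) := by
    intro i hi
    split_ifs with hi1
    · rw [prod_eq_zero (mem_erase.2 ⟨i.succ_ne_zero, hi1⟩) (sub_self _), zero_div, mul_zero]
    · have hnodes : s.erase (i + 1) = insert 0 ((S.erase i).image (· + 1)) := by
        rw [erase_insert_of_ne i.succ_ne_zero.symm]
        exact congrArg _ (image_erase hsucc_inj S i).symm
      rw [hnodes, prod_insert (by simp), prod_image fun _ _ _ _ h => hsucc_inj h]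
      have := leadC_insert_succ (notMem_erase i S)
        (fun h => hi1 (mem_of_mem_erase (mem_of_mem_erase h)))
      rw [insert_erase hi] at this
      simpa [pronic] using this.symm
  have hI : leadC I = leadC S * ∏ b ∈ S, pronic b / pronic (b + 1) := by
    rw [← leadC_insert_zero (notMem_erase 0 I), hS]
  rw [hzero] at hL
  calc leadC I = leadC S * (1 - ∑ i ∈ S, (∏ b ∈ S, (pronic (i + 1) - pronic b)) /
        ∏ j ∈ s.erase (i + 1), (pronic (i + 1) - pronic j)) := by
        rw [hI, eq_sub_of_add_eq hL.symm]
    _ = leadC S - ∑ i ∈ S, leadC S * ((∏ b ∈ S, (pronic (i + 1) - pronic b)) /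
        ∏ j ∈ s.erase (i + 1), (pronic (i + 1) - pronic j)) := by
        rw [mul_sub, mul_one, mul_sum]
    _ = _ := by rw [sum_congr rfl hterm, sum_ite, sum_const_zero, zero_add, mul_sum]

/-- The relaxation of `IsPolyWithLead` to degree `≤ d`; unlike it, closed under linear
combinations. -/
def IsPolyWithTopCoeff (f : ℕ → ℚ) (d : ℕ) (c : ℚ) : Prop :=
  ∃ p : ℚ[X], (∀ᶠ n in atTop, f n = p.eval (n : ℚ)) ∧ p.natDegree ≤ d ∧ p.coeff d = c

theorem IsPolyWithLead.isPolyWithTopCoeff {f : ℕ → ℚ} {d : ℕ} {c : ℚ}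
    (h : IsPolyWithLead f d c) : IsPolyWithTopCoeff f d c := by
  obtain ⟨p, hp, rfl, rfl⟩ := h
  exact ⟨p, hp, le_rfl, rfl⟩

namespace IsPolyWithTopCoeff

variable {f g : ℕ → ℚ} {d : ℕ} {a b : ℚ}

theorem isPolyWithLead (h : IsPolyWithTopCoeff f d a) (ha : a ≠ 0) : IsPolyWithLead f d a := by
  obtain ⟨p, hp, hdeg, rfl⟩ := h
  have hd : p.natDegree = d := le_antisymm hdeg (le_natDegree_of_ne_zero ha)
  exact ⟨p, hp, hd, hd ▸ rfl⟩

theorem zero (d : ℕ) : IsPolyWithTopCoeff (fun _ => 0) d 0 :=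
  ⟨0, .of_forall fun _ => by simp, by simp, by simp⟩

theorem add (hf : IsPolyWithTopCoeff f d a) (hg : IsPolyWithTopCoeff g d b) :
    IsPolyWithTopCoeff (fun n => f n + g n) d (a + b) := by
  obtain ⟨p, hp, hpd, rfl⟩ := hf
  obtain ⟨q, hq, hqd, rfl⟩ := hg
  refine ⟨p + q, ?_, (natDegree_add_le _ _).trans (max_le hpd hqd), coeff_add _ _ _⟩
  filter_upwards [hp, hq] with n hpn hqn
  simp [hpn, hqn]

theorem const_mul (hf : IsPolyWithTopCoeff f d a) (c : ℚ) :
    IsPolyWithTopCoeff (fun n => c * f n) d (c * a) := by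
  obtain ⟨p, hp, hpd, rfl⟩ := hf
  refine ⟨C c * p, ?_, (natDegree_C_mul_le _ _).trans hpd, coeff_C_mul _⟩
  filter_upwards [hp] with n hpn
  simp [hpn]

theorem sub (hf : IsPolyWithTopCoeff f d a) (hg : IsPolyWithTopCoeff g d b) :
    IsPolyWithTopCoeff (fun n => f n - g n) d (a - b) := by
  obtain ⟨p, hp, hpd, rfl⟩ := hf
  obtain ⟨q, hq, hqd, rfl⟩ := hg
  refine ⟨p - q, ?_, (natDegree_sub_le _ _).trans (max_le hpd hqd), coeff_sub _ _ _⟩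
  filter_upwards [hp, hq] with n hpn hqn
  simp [hpn, hqn]

theorem sum {ι : Type*} {s : Finset ι} {f : ι → ℕ → ℚ} {c : ι → ℚ}
    (h : ∀ i ∈ s, IsPolyWithTopCoeff (f i) d (c i)) :
    IsPolyWithTopCoeff (fun n => ∑ i ∈ s, f i n) d (∑ i ∈ s, c i) := by
  classical
  induction s using Finset.induction_on with
  | empty => simpa using zero d
  | insert j s hj ih =>
    simp only [sum_insert hj]
    exact (h j (mem_insert_self j s)).add (ih fun i hi => h i (mem_insert_of_mem hi))

theorem natCast_sub_mul (hf : IsPolyWithTopCoeff f d a) (c : ℚ) :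
    IsPolyWithTopCoeff (fun n => ((n : ℚ) - c) * f n) (d + 1) a := by
  obtain ⟨p, hp, hpd, rfl⟩ := hf
  refine ⟨p * (X - C c), ?_, natDegree_mul_le.trans (by simpa using hpd), ?_⟩
  · filter_upwards [hp] with n hpn
    simp [hpn, mul_comm]
  · rw [coeff_mul_X_sub_C, coeff_eq_zero_of_natDegree_lt (n := d + 1) (by omega), zero_mul,
      sub_zero]

end IsPolyWithTopCoeff

theorem card_add_sum_insert_erase {i j : ℕ} {S : Finset ℕ} (hi : i ∈ S) (hj : j ∉ S) :
    #(insert j (S.erase i)) + ∑ x ∈ insert j (S.erase i), x + i = #S + ∑ x ∈ S, x + j := by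
  have hj' : j ∉ S.erase i := fun h => hj (mem_of_mem_erase h)
  rw [card_insert_of_notMem hj', sum_insert hj', ← card_erase_add_one hi, ← add_sum_erase S _ hi]
  ring

/-- Inductive step (Case 1, `0 ∈ I`) of the leading-coefficient theorem for type C
Lascoux polynomials: if `LP` satisfies the first recurrence
`LP_I(n) = (n - r + 1) LP_{I∖{0}}(n) - 2 ∑_{i ∈ I, i ≠ 0, i+1 ∉ I} LP_{I∪{i+1}∖{0,i}}(n)`
and every set `J` appearing on the right-hand side satisfies the degree and
leading-coefficient formula, then so does `I`. -/
theorem lascoux_leading_coeff_inductive_step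
    (LP : Finset ℕ → ℕ → ℚ) (I : Finset ℕ) (h0 : 0 ∈ I)
    (hrec : ∀ n : ℕ, LP I n =
      ((n : ℚ) - (I.card : ℚ) + 1) * LP (I.erase 0) n -
        2 * ∑ i ∈ (I.erase 0).filter (fun i => i + 1 ∉ I),
          LP (insert (i + 1) ((I.erase 0).erase i)) n)
    (h1 : IsPolyWithLead (LP (I.erase 0))
      ((I.erase 0).card + ∑ i ∈ I.erase 0, i) (leadC (I.erase 0)))
    (h2 : ∀ i ∈ (I.erase 0).filter (fun i => i + 1 ∉ I),
      IsPolyWithLead (LP (insert (i + 1) ((I.erase 0).erase i)))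
        ((insert (i + 1) ((I.erase 0).erase i)).card +
          ∑ j ∈ insert (i + 1) ((I.erase 0).erase i), j)
        (leadC (insert (i + 1) ((I.erase 0).erase i)))) :
    IsPolyWithLead (LP I) (I.card + ∑ i ∈ I, i) (leadC I) := by
  have hdegI : #I + ∑ i ∈ I, i = #(I.erase 0) + ∑ i ∈ I.erase 0, i + 1 := by
    rw [← card_erase_add_one h0, sum_erase I rfl]; ring
  have hdegJ : ∀ i ∈ (I.erase 0).filter (fun i => i + 1 ∉ I),
      #(insert (i + 1) ((I.erase 0).erase i)) + ∑ j ∈ insert (i + 1) ((I.erase 0).erase i), j =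
        #(I.erase 0) + ∑ i ∈ I.erase 0, i + 1 := by
    intro i hi
    obtain ⟨hiS, hi1⟩ := mem_filter.1 hi
    have := card_add_sum_insert_erase hiS fun h => hi1 (mem_of_mem_erase h)
    omega
  have hLP : LP I = fun n : ℕ => ((n : ℚ) - (#I - 1)) * LP (I.erase 0) n -
      2 * ∑ i ∈ (I.erase 0).filter (fun i => i + 1 ∉ I),
        LP (insert (i + 1) ((I.erase 0).erase i)) n :=
    funext fun n => by rw [hrec n]; ring
  have hlead := leadC_eq_sub_sum h0
  rw [hdegI, hLP, hlead]
  refine ((h1.isPolyWithTopCoeff.natCast_sub_mul _).sub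
    ((IsPolyWithTopCoeff.sum fun i hi => ?_).const_mul 2)).isPolyWithLead
    (hlead ▸ (leadC_pos I).ne')
  exact hdegJ i hi ▸ (h2 i hi).isPolyWithTopCoeff
end

section
/- For every integer m > 0, the leading coefficient of the polynomial n ↦ δ(m, n, n−1) equals 2^{m−1}/m!, and the degree of this polynomial is m. -/
open Finset

/-- Pascal-matrix minor with rows `I` and columns `J` (each sorted, of size `r`). -/
noncomputable def pascalMinor (r : ℕ) (I J : Finset ℕ) : ℤ :=
  Matrix.det (Matrix.of fun a b : Fin r =>
    (Nat.choose ((I.sort (· ≤ ·)).getD a 0) ((J.sort (· ≤ ·)).getD b 0) : ℤ))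

/-- The Lascoux coefficient `ψ_I`. -/
noncomputable def lascouxCoeff (I : Finset ℕ) : ℤ :=
  ∑ᶠ J ∈ {J : Finset ℕ | J.card = I.card}, pascalMinor I.card I J

/-- The Lascoux polynomial (type C). -/
noncomputable def LPC (I : Finset ℕ) (n : ℕ) : ℤ :=
  if I ⊆ Finset.range n then lascouxCoeff (Finset.range n \ I) else 0

/-- The algebraic degree of semidefinite programming via the Bothmer–Ranestad formula:
`δ(m,n,n-s) = ∑_{I ⊆ [n], |I| = s, ∑I = m-s} ψ_I · LP_I(n)`. -/
noncomputable def deltaC (m n s : ℕ) : ℤ :=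
  ∑ I ∈ ((Finset.range n).powersetCard s).filter (fun I => (∑ i ∈ I, i) + s = m),
    lascouxCoeff I * LPC I n

/-! For `s = 1` and `n ≥ m` the Bothmer–Ranestad sum has the single term `I = {m - 1}`, so
`δ(m, n, n - 1) = ψ_{m-1} · ψ_{[n] \ {m-1}}`, and `ψ_{m-1} = ∑_j C(m-1, j) = 2^{m-1}`.
The minors of the unimodular Pascal matrix `(C(a, b))` with one row `i` and one column `j`
deleted are, up to sign, the entries of its inverse `((-1)^{a+b} C(a, b))`, hence equal
`C(j, i)`; by the hockey-stick identity `ψ_{[n] \ {i}} = ∑_j C(j, i) = C(n, i + 1)`.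
Therefore `δ(m, n, n - 1) = 2^{m-1} C(n, m)` for `n ≥ m`, the values of the degree-`m`
polynomial `2^{m-1}/m! · n (n - 1) ⋯ (n - m + 1)`. -/

theorem sum_choose_mul_neg_one_pow_mul_choose (a b : ℕ) :
    ∑ k ∈ range (a + 1), (a.choose k : ℤ) * ((-1) ^ (k + b) * (k.choose b : ℤ)) =
      if a = b then 1 else 0 := by
  rcases lt_or_ge a b with hab | hba
  · rw [if_neg hab.ne]
    refine sum_eq_zero fun k hk => ?_
    rw [Nat.choose_eq_zero_of_lt (n := k) (k := b) (by grind), Nat.cast_zero, mul_zero, mul_zero]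
  obtain ⟨d, rfl⟩ := Nat.exists_eq_add_of_le hba
  have hterm (t : ℕ) : ((b + d).choose (b + t) : ℤ) * ((-1) ^ (b + t + b) * ((b + t).choose b)) =
      ((b + d).choose b : ℤ) * ((-1) ^ t * (d.choose t)) := by
    have h : ((b + d).choose (b + t) : ℤ) * (b + t).choose b = (b + d).choose b * d.choose t := by
      have h := Nat.choose_mul (n := b + d) (Nat.le_add_right b t)
      rw [Nat.add_sub_cancel_left, Nat.add_sub_cancel_left] at h
      exact_mod_cast h
    rw [show b + t + b = t + 2 * b by ring, pow_add, pow_mul, neg_one_sq, one_pow, mul_one]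
    linear_combination (-1 : ℤ) ^ t * h
  rw [add_assoc, sum_range_add, sum_eq_zero fun k hk => by
      rw [Nat.choose_eq_zero_of_lt (mem_range.mp hk), Nat.cast_zero, mul_zero, mul_zero],
    zero_add, sum_congr rfl fun t _ => hterm t, ← mul_sum, Int.alternating_sum_range_choose]
  rcases d with _ | d <;> simp

def pascalMatrix (n : ℕ) : Matrix (Fin n) (Fin n) ℤ :=
  Matrix.of fun a b => ((a : ℕ).choose b : ℤ)

def signedPascalMatrix (n : ℕ) : Matrix (Fin n) (Fin n) ℤ :=
  Matrix.of fun a b => (-1) ^ ((a : ℕ) + b) * ((a : ℕ).choose b : ℤ)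

theorem pascalMatrix_mul_signedPascalMatrix (n : ℕ) :
    pascalMatrix n * signedPascalMatrix n = 1 := by
  ext a b
  have hsupp : range ((a : ℕ) + 1) ⊆ range n := range_subset_range.mpr a.isLt
  simp only [Matrix.mul_apply, Matrix.one_apply, pascalMatrix, signedPascalMatrix, Matrix.of_apply]
  rw [Fin.sum_univ_eq_sum_range
    (fun k => ((a : ℕ).choose k : ℤ) * ((-1) ^ (k + (b : ℕ)) * (k.choose b : ℤ))),
    ← sum_subset hsupp fun k _ hk => by
      rw [Nat.choose_eq_zero_of_lt (by simpa using hk), Nat.cast_zero, zero_mul],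
    sum_choose_mul_neg_one_pow_mul_choose]
  simp only [Fin.val_inj]

theorem det_pascalMatrix (n : ℕ) : (pascalMatrix n).det = 1 := by
  rw [Matrix.det_of_isLowerTriangular _ fun i j hij => by
    simp [pascalMatrix, Nat.choose_eq_zero_of_lt (show (i : ℕ) < j from hij)]]
  simp [pascalMatrix]

theorem adjugate_pascalMatrix (n : ℕ) : (pascalMatrix n).adjugate = signedPascalMatrix n := by
  rw [← Matrix.inv_eq_right_inv (pascalMatrix_mul_signedPascalMatrix n), Matrix.inv_def,
    det_pascalMatrix, Ring.inverse_one, one_smul]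

theorem det_pascalMatrix_submatrix_succAbove {N : ℕ} (i j : Fin (N + 1)) :
    ((pascalMatrix (N + 1)).submatrix i.succAbove j.succAbove).det = ((j : ℕ).choose i : ℤ) := by
  have h := Matrix.adjugate_fin_succ_eq_det_submatrix (pascalMatrix (N + 1)) j i
  rw [adjugate_pascalMatrix] at h
  simp only [signedPascalMatrix, Matrix.of_apply, add_comm (j : ℕ)] at h
  exact (mul_left_cancel₀ (pow_ne_zero _ (neg_ne_zero.mpr one_ne_zero)) h).symm

theorem Finset.getD_sort_eq_of_strictMono {α : Type*} [LinearOrder α] {s : Finset α} {k : ℕ}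
    (hs : s.card = k) {f : Fin k → α} (hfs : ∀ x, f x ∈ s) (hf : StrictMono f) (a : Fin k)
    (d : α) : (s.sort (· ≤ ·)).getD a d = f a := by
  rw [congrFun (orderEmbOfFin_unique hs hfs hf) a, orderEmbOfFin_apply,
    List.getD_eq_getElem _ _ (by simp [hs])]
  rfl

theorem pascalMinor_eq_det {r : ℕ} {I J : Finset ℕ} (hI : I.card = r) (hJ : J.card = r)
    {f g : Fin r → ℕ} (hfI : ∀ a, f a ∈ I) (hf : StrictMono f) (hgJ : ∀ b, g b ∈ J)
    (hg : StrictMono g) :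
    pascalMinor r I J = (Matrix.of fun a b => ((f a).choose (g b) : ℤ)).det := by
  simp only [pascalMinor, getD_sort_eq_of_strictMono hI hfI hf,
    getD_sort_eq_of_strictMono hJ hgJ hg]

theorem pascalMinor_range_erase {N : ℕ} (i j : Fin (N + 1)) :
    pascalMinor N ((range (N + 1)).erase i) ((range (N + 1)).erase j) = ((j : ℕ).choose i : ℤ) := by
  have hcard (p : Fin (N + 1)) : ((range (N + 1)).erase p).card = N := by
    rw [card_erase_of_mem (mem_range.mpr p.isLt), card_range, Nat.add_sub_cancel]
  have henum (p : Fin (N + 1)) (a : Fin N) : (p.succAbove a : ℕ) ∈ (range (N + 1)).erase p := by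
    rw [mem_erase, mem_range, Ne, Fin.val_inj]
    exact ⟨Fin.succAbove_ne p a, (p.succAbove a).isLt⟩
  have hmono (p : Fin (N + 1)) : StrictMono fun a : Fin N => (p.succAbove a : ℕ) :=
    Fin.val_strictMono.comp (Fin.strictMono_succAbove p)
  rw [pascalMinor_eq_det (hcard i) (hcard j) (henum i) (hmono i) (henum j) (hmono j),
    ← det_pascalMatrix_submatrix_succAbove]
  rfl

theorem pascalMinor_eq_zero_of_lt {r : ℕ} {I J : Finset ℕ} (hI : I.card = r) (hJ : J.card = r)
    {y : ℕ} (hy : y ∈ J) (hIy : ∀ x ∈ I, x < y) : pascalMinor r I J = 0 := by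
  obtain ⟨b, hb⟩ : ∃ b : Fin r, J.orderEmbOfFin hJ b = y := by
    rw [← Set.mem_range, range_orderEmbOfFin]
    exact hy
  refine Matrix.det_eq_zero_of_column_eq_zero b fun a => ?_
  rw [Matrix.of_apply,
    getD_sort_eq_of_strictMono hI (orderEmbOfFin_mem I hI) (I.orderEmbOfFin hI).strictMono,
    getD_sort_eq_of_strictMono hJ (orderEmbOfFin_mem J hJ) (J.orderEmbOfFin hJ).strictMono, hb,
    Nat.choose_eq_zero_of_lt (hIy _ (orderEmbOfFin_mem I hI a)), Nat.cast_zero]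

theorem lascouxCoeff_eq_sum_powersetCard {I : Finset ℕ} {n : ℕ} (hI : I ⊆ range n) :
    lascouxCoeff I = ∑ J ∈ (range n).powersetCard I.card, pascalMinor I.card I J := by
  refine finsum_mem_eq_sum_of_inter_support_eq _ (Set.ext fun J => ?_)
  simp only [Set.mem_inter_iff, Set.mem_ofPred_eq, Function.mem_support, mem_coe,
    mem_powersetCard]
  refine ⟨fun ⟨hJ, hne⟩ => ⟨⟨fun y hy => ?_, hJ⟩, hne⟩, fun ⟨⟨_, hJ⟩, hne⟩ => ⟨hJ, hne⟩⟩
  by_contra hyn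
  exact hne (pascalMinor_eq_zero_of_lt rfl hJ hy fun x hx =>
    (mem_range.mp (hI hx)).trans_le (by simpa using hyn))

theorem lascouxCoeff_singleton (i : ℕ) : lascouxCoeff {i} = 2 ^ i := by
  have hminor (j : ℕ) : pascalMinor 1 {i} {j} = (i.choose j : ℤ) := by
    simp [pascalMinor]
  rw [lascouxCoeff_eq_sum_powersetCard (n := i + 1) (by simp), card_singleton, powersetCard_one,
    sum_map]
  simp only [Function.Embedding.coeFn_mk, hminor]
  exact_mod_cast Nat.sum_range_choose i

theorem Finset.powersetCard_eq_image_erase {α : Type*} [DecidableEq α] {s : Finset α} {k : ℕ}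
    (hs : s.card = k + 1) : s.powersetCard k = s.image s.erase := by
  ext J
  simp only [mem_powersetCard, mem_image]
  constructor
  · rintro ⟨hJs, hJ⟩
    refine (covBy_iff_card_sdiff_eq_one.mpr ⟨hJs, ?_⟩).exists_finset_erase
    rw [card_sdiff_of_subset hJs, hs, hJ, Nat.add_sub_cancel_left]
  · rintro ⟨a, ha, rfl⟩
    exact ⟨erase_subset a s, by rw [card_erase_of_mem ha, hs, Nat.add_sub_cancel]⟩

theorem sum_range_choose_eq_choose_succ (n k : ℕ) :
    ∑ j ∈ range (n + 1), j.choose k = (n + 1).choose (k + 1) := by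
  rw [← Nat.sum_Icc_choose, eq_comm]
  refine sum_subset (fun j hj => mem_range.mpr (Nat.lt_succ_of_le (mem_Icc.mp hj).2))
    fun j hj hjk => Nat.choose_eq_zero_of_lt ?_
  simp only [mem_range, mem_Icc] at hj hjk
  omega

theorem lascouxCoeff_range_erase {n i : ℕ} (hi : i < n) :
    lascouxCoeff ((range n).erase i) = (n.choose (i + 1) : ℤ) := by
  obtain ⟨N, rfl⟩ : ∃ N, n = N + 1 := ⟨n - 1, by omega⟩
  have hcard : ((range (N + 1)).erase i).card = N := by
    rw [card_erase_of_mem (mem_range.mpr hi), card_range, Nat.add_sub_cancel]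
  rw [lascouxCoeff_eq_sum_powersetCard (erase_subset _ _), hcard,
    powersetCard_eq_image_erase (card_range _), sum_image (erase_injOn _),
    sum_congr rfl fun j hj =>
      (pascalMinor_range_erase ⟨i, hi⟩ ⟨j, mem_range.mp hj⟩ : _ = ((j.choose i : ℕ) : ℤ))]
  exact_mod_cast sum_range_choose_eq_choose_succ N i

theorem deltaC_one_eq {m n : ℕ} (hm : 0 < m) (hmn : m ≤ n) :
    deltaC m n 1 = 2 ^ (m - 1) * (n.choose m : ℤ) := by
  have hindex : ((range n).powersetCard 1).filter (fun I => (∑ i ∈ I, i) + 1 = m) =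
      {{m - 1}} := by
    ext I
    simp only [mem_filter, mem_powersetCard, card_eq_one, mem_singleton]
    constructor
    · rintro ⟨⟨-, j, rfl⟩, hj⟩
      rw [sum_singleton] at hj
      rw [← hj, Nat.add_sub_cancel]
    · rintro rfl
      simp only [singleton_subset_iff, mem_range, sum_singleton, singleton_inj, exists_eq', and_true]
      exact ⟨by omega, by omega⟩
  have hmem : {m - 1} ⊆ range n := by
    rw [singleton_subset_iff, mem_range]
    omega
  rw [deltaC, hindex, sum_singleton, lascouxCoeff_singleton, LPC, if_pos hmem,
    sdiff_singleton_eq_erase, lascouxCoeff_range_erase (by omega), Nat.sub_add_cancel hm]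

/-- `n ↦ δ(m,n,n-1)` is a polynomial of degree `m` with leading coefficient `2^{m-1}/m!`. -/
theorem deltaC_degree_leadingCoeff (m : ℕ) (hm : 0 < m) :
    ∃ p : Polynomial ℚ,
      (∀ᶠ n in Filter.atTop, (deltaC m n 1 : ℚ) = p.eval (n : ℚ)) ∧
      p.natDegree = m ∧
      p.leadingCoeff = 2 ^ (m - 1) / (Nat.factorial m : ℚ) := by
  have hc : (2 ^ (m - 1) / m.factorial : ℚ) ≠ 0 := by positivity
  refine ⟨Polynomial.C (2 ^ (m - 1) / m.factorial : ℚ) * descPochhammer ℚ m, ?_, ?_, ?_⟩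
  · filter_upwards [Filter.eventually_ge_atTop m] with n hmn
    rw [deltaC_one_eq hm hmn, Polynomial.eval_mul, Polynomial.eval_C,
      descPochhammer_eval_eq_descFactorial, Nat.descFactorial_eq_factorial_mul_choose]
    push_cast
    field_simp
  · rw [Polynomial.natDegree_C_mul hc, descPochhammer_natDegree]
  · rw [Polynomial.leadingCoeff_mul, Polynomial.leadingCoeff_C,
      (monic_descPochhammer ℚ m).leadingCoeff, mul_one]
end

section
/- For every integer m > 0, 2^{m−1}/m! + (2^{m−2}/(m² · m!)) · ∑_{i=1}^{⌊(m−1)/2⌋} (m − 2i)² C(m, i)² = (2^{m−2}/m!) · ((1/m) C(2(m−1), m−1) + 1). -/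
/-!
Write `F(i) = (m - 2i)² C(m,i)²`. Since `(m - 2i)² = 4i² - m² + 2m(m - 2i)` and
`∑ (m - 2i) C(m,i)² = 0` by the symmetry `i ↦ m - i`, the full sum `∑_{i=0}^m F(i)` is
`4m² C(2m-2, m-1) - m² C(2m, m) = 2m C(2m-2, m-1)`, using Vandermonde and
`m C(2m, m) = 2(2m - 1) C(2m-2, m-1)`. As `F` is symmetric, vanishes at `m/2`, and
`F(0) = F(m) = m²`, the sum over `1 ≤ i ≤ ⌊(m-1)/2⌋` is `m C(2m-2, m-1) - m²`; the theorem is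
then a rational identity.
-/

open Finset Nat

theorem sum_range_succ_eq_two_nsmul_of_symm {M : Type*} [AddCommMonoid M] {f : ℕ → M} {m : ℕ}
    (hsymm : ∀ i ≤ m, f (m - i) = f i) (hmid : Even m → f (m / 2) = 0) :
    ∑ i ∈ range (m + 1), f i = 2 • ∑ i ∈ range ((m + 1) / 2), f i := by
  obtain ⟨h, rfl | rfl⟩ := Nat.even_or_odd' m
  · have upper : ∑ j ∈ range h, f (h + (j + 1)) = ∑ j ∈ range h, f j := by
      rw [← sum_range_reflect]
      refine sum_congr rfl fun j hj => ?_
      have := mem_range.mp hj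
      rw [← hsymm j (by omega)]
      congr 1
      omega
    have center : f h = 0 := by simpa using hmid (even_two_mul h)
    rw [show 2 * h + 1 = h + (h + 1) by omega, sum_range_add, sum_range_succ', upper,
      show (h + (h + 1)) / 2 = h by omega, add_zero, center, add_zero, two_nsmul]
  · have upper : ∑ j ∈ range (h + 1), f (h + 1 + j) = ∑ j ∈ range (h + 1), f j := by
      rw [← sum_range_reflect]
      refine sum_congr rfl fun j hj => ?_
      have := mem_range.mp hj
      rw [← hsymm j (by omega)]
      congr 1
      omega
    rw [show 2 * h + 1 + 1 = h + 1 + (h + 1) by omega, sum_range_add, upper,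
      show (h + 1 + (h + 1)) / 2 = h + 1 by omega, two_nsmul]

theorem sum_range_sub_two_mul_mul_choose_sq (m : ℕ) :
    ∑ i ∈ range (m + 1), ((m : ℤ) - 2 * i) * (m.choose i : ℤ) ^ 2 = 0 := by
  have hneg : ∑ i ∈ range (m + 1), ((m : ℤ) - 2 * i) * (m.choose i : ℤ) ^ 2 =
      -∑ i ∈ range (m + 1), ((m : ℤ) - 2 * i) * (m.choose i : ℤ) ^ 2 := by
    rw [← sum_neg_distrib, ← sum_range_reflect]
    refine sum_congr rfl fun i hi => ?_
    have hi : i ≤ m := Nat.lt_succ_iff.mp (mem_range.mp hi)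
    rw [Nat.add_sub_cancel, Nat.choose_symm hi, Nat.cast_sub hi]
    ring
  linarith

theorem sum_range_sq_mul_choose_sq (n : ℕ) :
    ∑ i ∈ range (n + 2), i ^ 2 * (n + 1).choose i ^ 2 = (n + 1) ^ 2 * centralBinom n := by
  rw [sum_range_succ', Nat.centralBinom_eq_two_mul_choose, ← Nat.sum_range_choose_sq, mul_sum]
  simp only [zero_pow two_ne_zero, zero_mul, add_zero, ← mul_pow]
  refine sum_congr rfl fun i _ => ?_
  rw [mul_comm, ← Nat.add_one_mul_choose_eq]

theorem sum_range_sub_two_mul_sq_mul_choose_sq (n : ℕ) :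
    ∑ i ∈ range (n + 2), ((n + 1 : ℤ) - 2 * i) ^ 2 * ((n + 1).choose i : ℤ) ^ 2 =
      (2 * (n + 1) * centralBinom n : ℤ) := by
  have hS0 : ∑ i ∈ range (n + 2), ((n + 1).choose i : ℤ) ^ 2 = centralBinom (n + 1) := by
    exact_mod_cast
      (Nat.sum_range_choose_sq (n + 1)).trans (Nat.centralBinom_eq_two_mul_choose _).symm
  have hS1 := sum_range_sub_two_mul_mul_choose_sq (n + 1)
  have hS2 : ∑ i ∈ range (n + 2), (i : ℤ) ^ 2 * ((n + 1).choose i : ℤ) ^ 2 =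
      (n + 1) ^ 2 * centralBinom n := by
    exact_mod_cast sum_range_sq_mul_choose_sq n
  have hcb : ((n + 1) * centralBinom (n + 1) : ℤ) = 2 * (2 * n + 1) * centralBinom n := by
    exact_mod_cast Nat.succ_mul_centralBinom_succ n
  calc ∑ i ∈ range (n + 2), ((n + 1 : ℤ) - 2 * i) ^ 2 * ((n + 1).choose i : ℤ) ^ 2
      = 4 * ∑ i ∈ range (n + 2), (i : ℤ) ^ 2 * ((n + 1).choose i : ℤ) ^ 2
        - (n + 1) ^ 2 * ∑ i ∈ range (n + 2), ((n + 1).choose i : ℤ) ^ 2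
        + 2 * (n + 1) *
          ∑ i ∈ range (n + 2), ((n + 1 : ℕ) - 2 * i : ℤ) * ((n + 1).choose i : ℤ) ^ 2 := by
        simp only [mul_sum, ← sum_sub_distrib, ← sum_add_distrib]
        refine sum_congr rfl fun i _ => ?_
        push_cast
        ring
    _ = 2 * (n + 1) * centralBinom n := by
      rw [hS0, hS1, hS2]
      linear_combination (-(n + 1 : ℤ)) * hcb

theorem sum_Icc_sub_two_mul_sq_mul_choose_sq (n : ℕ) :
    ∑ i ∈ Icc 1 (n / 2), ((n + 1 : ℤ) - 2 * i) ^ 2 * ((n + 1).choose i : ℤ) ^ 2 =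
      ((n + 1) * centralBinom n - (n + 1) ^ 2 : ℤ) := by
  set f : ℕ → ℤ := fun i => ((n + 1 : ℤ) - 2 * i) ^ 2 * ((n + 1).choose i : ℤ) ^ 2
  have hsymm : ∀ i ≤ n + 1, f (n + 1 - i) = f i := fun i hi => by
    simp only [f, Nat.choose_symm hi, Nat.cast_sub hi]
    push_cast
    ring
  have hmid : Even (n + 1) → f ((n + 1) / 2) = 0 := fun ⟨k, hk⟩ => by
    have hk' : (n + 1 : ℤ) = k + k := by exact_mod_cast hk
    simp only [f, show (n + 1) / 2 = k by omega, hk']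
    ring
  have hfull := sum_range_sub_two_mul_sq_mul_choose_sq n
  rw [sum_range_succ_eq_two_nsmul_of_symm hsymm hmid, show (n + 1 + 1) / 2 = n / 2 + 1 by omega,
    sum_range_eq_add_Ico _ (by omega), Finset.Ico_add_one_right_eq_Icc] at hfull
  have hf0 : f 0 = (n + 1) ^ 2 := by simp [f]
  rw [hf0, two_nsmul] at hfull
  linarith

theorem type_D_leading_coefficient_identity (m : ℕ) (hm : 0 < m) :
    (2 : ℚ) ^ (m - 1) / (Nat.factorial m : ℚ) +
      (2 : ℚ) ^ ((m : ℤ) - 2) / ((m : ℚ) ^ 2 * (Nat.factorial m : ℚ)) *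
        ∑ i ∈ Finset.Icc 1 ((m - 1) / 2), ((m : ℚ) - 2 * (i : ℚ)) ^ 2 * (Nat.choose m i : ℚ) ^ 2 =
    (2 : ℚ) ^ ((m : ℤ) - 2) / (Nat.factorial m : ℚ) *
      ((Nat.choose (2 * (m - 1)) (m - 1) : ℚ) / (m : ℚ) + 1) := by
  obtain ⟨n, rfl⟩ : ∃ n, m = n + 1 := ⟨m - 1, by omega⟩
  have hsum : ∑ i ∈ Icc 1 (n / 2), (((n + 1 : ℕ) : ℚ) - 2 * i) ^ 2 * ((n + 1).choose i : ℚ) ^ 2 =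
      ((n + 1) * centralBinom n - (n + 1) ^ 2 : ℚ) := by
    exact_mod_cast sum_Icc_sub_two_mul_sq_mul_choose_sq n
  rw [Nat.add_sub_cancel, ← Nat.centralBinom_eq_two_mul_choose, hsum, zpow_sub₀ two_ne_zero,
    zpow_natCast]
  field_simp
  push_cast
  ring
end

section
/- In the Double Product Lemma, after clearing denominators, the numerator polynomial A(x̄, ȳ) changes sign under any transposition of two x-variables (and likewise two y-variables); consequently A is divisible by the Vandermonde products ∏_{k<l}(x_k − x_l) and ∏_{k<l}(y_k − y_l) in the polynomial ring k[x_1,…,x_r,y_1,…,y_r]. -/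
/-!
On admissible points (`x`, `y` injective, `x_k + y_l + 2 ≠ 0`) the value of `A` is the
right-hand side times the common denominator. Permuting the `x`'s (or the `y`'s) only
changes the sign of one Vandermonde factor: the other factors and the bracket are symmetric.
Admissible points are the non-zeros of a nonzero polynomial `D`, so `(rename A - ±A) * D`
vanishes everywhere and `A` is alternating. An alternating polynomial vanishes after the
substitution `x_b := x_a`, hence is divisible by the prime `x_a - x_b`; these primes are
pairwise non-associated, so their product divides `A`.
-/

open Finset MvPolynomial

section Vandermonde

variable {R : Type*} [CommRing R] {n : ℕ}

theorem prod_filter_lt_sub_eq_neg_one_pow_mul_det_vandermonde (v : Fin n → R) :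
    ∏ p ∈ (univ : Finset (Fin n × Fin n)).filter (fun p => p.1 < p.2), (v p.1 - v p.2) =
      (-1) ^ #((univ : Finset (Fin n × Fin n)).filter (fun p => p.1 < p.2)) *
        (Matrix.vandermonde v).det := by
  have hpairs : ∏ p ∈ (univ : Finset (Fin n × Fin n)).filter (fun p => p.1 < p.2),
      (v p.2 - v p.1) = ∏ i, ∏ j ∈ Ioi i, (v j - v i) := by
    rw [prod_sigma']
    exact prod_nbij' (fun p => ⟨p.1, p.2⟩) (fun p => (p.1, p.2)) (by simp) (by simp)
      (by simp) (by simp) (by simp)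
  rw [Matrix.det_vandermonde, ← hpairs, ← prod_const, ← prod_mul_distrib]
  exact prod_congr rfl fun _ _ => by ring

theorem prod_filter_lt_sub_comp_perm (v : Fin n → R) (σ : Equiv.Perm (Fin n)) :
    ∏ p ∈ (univ : Finset (Fin n × Fin n)).filter (fun p => p.1 < p.2),
        ((v ∘ σ) p.1 - (v ∘ σ) p.2) =
      Equiv.Perm.sign σ * ∏ p ∈ (univ : Finset (Fin n × Fin n)).filter (fun p => p.1 < p.2),
        (v p.1 - v p.2) := by
  rw [prod_filter_lt_sub_eq_neg_one_pow_mul_det_vandermonde,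
    prod_filter_lt_sub_eq_neg_one_pow_mul_det_vandermonde,
    show Matrix.vandermonde (v ∘ σ) = (Matrix.vandermonde v).submatrix σ id from rfl,
    Matrix.det_permute]
  ring

theorem prod_filter_lt_sub_ne_zero_iff [IsDomain R] {v : Fin n → R} :
    ∏ p ∈ (univ : Finset (Fin n × Fin n)).filter (fun p => p.1 < p.2),
        (v p.1 - v p.2) ≠ 0 ↔ Function.Injective v := by
  rw [prod_filter_lt_sub_eq_neg_one_pow_mul_det_vandermonde, mul_ne_zero_iff,
    Matrix.det_vandermonde_ne_zero_iff]
  simp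

end Vandermonde

theorem Finset.prod_dvd_of_prime_of_pairwise_not_dvd {M ι : Type*} [CommMonoidWithZero M]
    {s : Finset ι} {f : ι → M} {a : M} (hprime : ∀ i ∈ s, Prime (f i))
    (hndvd : (s : Set ι).Pairwise fun i j => ¬ f i ∣ f j) (hdvd : ∀ i ∈ s, f i ∣ a) :
    ∏ i ∈ s, f i ∣ a := by
  classical
  induction s using Finset.induction_on generalizing a with
  | empty => simp
  | insert i s his ih =>
    obtain ⟨b, rfl⟩ := hdvd i (mem_insert_self i s)
    rw [prod_insert his]
    refine mul_dvd_mul_left _ (ih (fun j hj => hprime j (mem_insert_of_mem hj))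
      (hndvd.mono (by simp)) fun j hj => ?_)
    have hji : j ≠ i := fun h => his (h ▸ hj)
    refine ((hprime j (mem_insert_of_mem hj)).dvd_or_dvd
      (hdvd j (mem_insert_of_mem hj))).resolve_left ?_
    exact hndvd (by simp [hj]) (by simp) hji

namespace MvPolynomial

variable {R σ : Type*} [CommRing R]

theorem eq_zero_of_eval_eq_zero_of_eval_ne_zero [IsDomain R] [Infinite R]
    {P g : MvPolynomial σ R} (hg : g ≠ 0) (h : ∀ z, eval z g ≠ 0 → eval z P = 0) :
    P = 0 := by
  have hPg : P * g = 0 := funext fun z => by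
    by_cases hz : eval z g = 0 <;> simp [hz, h z]
  exact (mul_eq_zero.mp hPg).resolve_right hg

theorem X_sub_X_dvd_sub_aeval_update [DecidableEq σ] (i j : σ) (P : MvPolynomial σ R) :
    X i - X j ∣ P - aeval (Function.update X j (X i)) P := by
  rw [← Ideal.mem_span_singleton, ← Ideal.Quotient.eq]
  have hmk : (Ideal.Quotient.mkₐ R (Ideal.span {X i - X j})).comp
      (aeval (Function.update X j (X i))) = Ideal.Quotient.mkₐ R _ := by
    refine algHom_ext fun k => ?_
    rcases eq_or_ne k j with rfl | hk
    · simp [Ideal.Quotient.eq]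
    · simp [hk]
  exact (DFunLike.congr_fun hmk P).symm

theorem X_sub_X_dvd_of_rename_swap_eq_neg [IsDomain R] [NeZero (2 : R)] [DecidableEq σ]
    {i j : σ} {P : MvPolynomial σ R} (hP : rename (Equiv.swap i j) P = -P) :
    X i - X j ∣ P := by
  set φ := aeval (R := R) (Function.update (X : σ → MvPolynomial σ R) j (X i))
  have hφ : φ.comp (rename (Equiv.swap i j)) = φ := by
    refine algHom_ext fun k => ?_
    simp only [φ, AlgHom.comp_apply, rename_X, aeval_X, Function.update_apply,
      Equiv.swap_apply_def]
    split_ifs <;> simp_all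
  have hφP : φ P = 0 := by
    have h := DFunLike.congr_fun hφ P
    rw [AlgHom.comp_apply, hP, map_neg, neg_eq_iff_add_eq_zero, ← two_mul] at h
    exact (mul_eq_zero.mp h).resolve_left (by
      rw [← map_ofNat C 2]; exact C_ne_zero.mpr two_ne_zero)
  have hdvd : X i - X j ∣ P - φ P := X_sub_X_dvd_sub_aeval_update i j P
  rwa [hφP, sub_zero] at hdvd

theorem prime_X_sub_X [IsDomain R] [DecidableEq σ] {i j : σ} (hij : i ≠ j) :
    Prime (X i - X j : MvPolynomial σ R) := by
  let shift (c : R) : MvPolynomial σ R →ₐ[R] MvPolynomial σ R :=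
    aeval (Function.update X i (X i + C c * X j))
  have hshift : ∀ c, (shift c).comp (shift (-c)) = AlgHom.id R _ := fun c =>
    algHom_ext fun k => by
      rcases eq_or_ne k i with rfl | hk
      · simp [shift, hij.symm]
      · simp [shift, hk]
  let E : MvPolynomial σ R ≃ₐ[R] MvPolynomial σ R :=
    AlgEquiv.ofAlgHom (shift (-1)) (shift 1) (by simpa using hshift (-1)) (hshift 1)
  have hE : E (X i) = X i - X j := by simp [E, shift, sub_eq_add_neg]
  exact hE ▸ (MulEquiv.prime_iff E.toMulEquiv).mpr X_prime

theorem eq_of_X_sub_X_dvd_X_sub_X [Nontrivial R] {i j k l : σ} (hkl : k ≠ l)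
    (h : (X i - X j : MvPolynomial σ R) ∣ X k - X l) : i = k ∧ j = l ∨ i = l ∧ j = k := by
  classical
  have heval : ∀ z : σ → R, z i = z j → z k = z l := by
    obtain ⟨c, hc⟩ := h
    intro z hz
    simpa [hz, sub_eq_zero] using congrArg (eval z) hc
  have hmem : ∀ m, m = k ∨ m = l → i = m ∨ j = m := by
    intro m hm
    by_contra! hij
    have := heval (Pi.single m 1) (by simp [hij.1.symm, hij.2.symm])
    rcases hm with rfl | rfl <;> simp [hkl, hkl.symm] at this
  rcases hmem k (.inl rfl), hmem l (.inr rfl) with ⟨rfl | rfl, rfl | rfl⟩ <;> simp_all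

theorem prod_X_sub_X_dvd_of_rename_swap_eq_neg [IsDomain R] [NeZero (2 : R)] [DecidableEq σ]
    {n : Type*} [Fintype n] [LinearOrder n] {v : n → σ} (hv : Function.Injective v)
    {P : MvPolynomial σ R} (hP : ∀ a b, a ≠ b → rename (Equiv.swap (v a) (v b)) P = -P) :
    ∏ p ∈ (univ : Finset (n × n)).filter (fun p => p.1 < p.2),
      (X (v p.1) - X (v p.2)) ∣ P := by
  refine prod_dvd_of_prime_of_pairwise_not_dvd (fun p hp => ?_) (fun p hp q hq hpq => ?_)
    fun p hp => ?_
  · exact prime_X_sub_X (hv.ne (mem_filter.mp hp).2.ne)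
  · intro hdvd
    have hp' := (mem_filter.mp hp).2
    have hq' := (mem_filter.mp hq).2
    rcases eq_of_X_sub_X_dvd_X_sub_X (hv.ne hq'.ne) hdvd with ⟨h1, h2⟩ | ⟨h1, h2⟩
    · exact hpq (Prod.ext (hv h1) (hv h2))
    · exact (hp'.trans ((hv h2).symm ▸ hq')).ne (hv h1)
  · exact X_sub_X_dvd_of_rename_swap_eq_neg (hP _ _ (mem_filter.mp hp).2.ne)

end MvPolynomial

namespace DoubleProduct

variable {K : Type*} [Field K] {r : ℕ}

def sumTerm (x y : Fin r → K) : K :=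
  ∑ l, (∏ k ∈ univ.erase l, (x k + 1)) * (∏ k, (y k + 1)) *
    (∏ k, (x l + y k + 1) / (x l + y k + 2)) *
    ∏ k ∈ univ.erase l, (x k - x l - 1) / (x k - x l)

/-- The right-hand side of the Double Product Lemma; its `y`-sum is `sumTerm y x`. -/
def bracket (x y : Fin r → K) : K :=
  (∏ k, (x k + 1) * (y k + 1)) - sumTerm x y - sumTerm y x

def numerator (x y : Fin r → K) : K :=
  (∏ p ∈ (univ : Finset (Fin r × Fin r)).filter (fun p => p.1 < p.2),
      ((x p.1 - x p.2) * (y p.1 - y p.2))) *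
    (∏ p : Fin r × Fin r, (x p.1 + y p.2 + 2)) * bracket x y

theorem prod_erase_comp_perm {M : Type*} [CommMonoid M] (f : Fin r → M)
    (σ : Equiv.Perm (Fin r)) (l : Fin r) :
    ∏ k ∈ univ.erase l, f (σ k) = ∏ k ∈ univ.erase (σ l), f k :=
  prod_equiv σ (by simp) (by simp)

theorem sumTerm_comp_perm_left (x y : Fin r → K) (σ : Equiv.Perm (Fin r)) :
    sumTerm (x ∘ σ) y = sumTerm x y := by
  refine (Fintype.sum_congr _ _ fun l => ?_).trans (Equiv.sum_comp σ _)
  simp only [Function.comp_apply, prod_erase_comp_perm (fun k => x k + 1),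
    prod_erase_comp_perm (fun k => (x k - x (σ l) - 1) / (x k - x (σ l)))]

theorem sumTerm_comp_perm_right (x y : Fin r → K) (σ : Equiv.Perm (Fin r)) :
    sumTerm x (y ∘ σ) = sumTerm x y := by
  refine Fintype.sum_congr _ _ fun l => ?_
  simp only [Function.comp_apply, Equiv.prod_comp σ (fun k => y k + 1),
    Equiv.prod_comp σ (fun k => (x l + y k + 1) / (x l + y k + 2))]

theorem bracket_comp_perm (x y : Fin r → K) (σ τ : Equiv.Perm (Fin r)) :
    bracket (x ∘ σ) (y ∘ τ) = bracket x y := by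
  simp only [bracket, sumTerm_comp_perm_left, sumTerm_comp_perm_right, prod_mul_distrib,
    Function.comp_apply, Equiv.prod_comp σ (fun k => x k + 1),
    Equiv.prod_comp τ (fun k => y k + 1)]

theorem numerator_comp_perm (x y : Fin r → K) (σ τ : Equiv.Perm (Fin r)) :
    numerator (x ∘ σ) (y ∘ τ) = Equiv.Perm.sign σ * Equiv.Perm.sign τ * numerator x y := by
  have hcross : ∏ p : Fin r × Fin r, ((x ∘ σ) p.1 + (y ∘ τ) p.2 + 2) =
      ∏ p : Fin r × Fin r, (x p.1 + y p.2 + 2) :=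
    Equiv.prod_comp (σ.prodCongr τ) fun p => x p.1 + y p.2 + 2
  rw [numerator, numerator, prod_mul_distrib, prod_mul_distrib, prod_filter_lt_sub_comp_perm,
    prod_filter_lt_sub_comp_perm, hcross, bracket_comp_perm]
  ring

def Admissible (x y : Fin r → K) : Prop :=
  Function.Injective x ∧ Function.Injective y ∧ ∀ k l, x k + y l + 2 ≠ 0

theorem Admissible.comp_perm {x y : Fin r → K} (h : Admissible x y) (σ τ : Equiv.Perm (Fin r)) :
    Admissible (x ∘ σ) (y ∘ τ) :=
  ⟨h.1.comp σ.injective, h.2.1.comp τ.injective, fun k l => h.2.2 (σ k) (τ l)⟩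

noncomputable def denominator : MvPolynomial (Fin r ⊕ Fin r) K :=
  (∏ p ∈ (univ : Finset (Fin r × Fin r)).filter (fun p => p.1 < p.2),
      (X (Sum.inl p.1) - X (Sum.inl p.2))) *
    (∏ p ∈ (univ : Finset (Fin r × Fin r)).filter (fun p => p.1 < p.2),
      (X (Sum.inr p.1) - X (Sum.inr p.2))) *
    ∏ p : Fin r × Fin r, (X (Sum.inl p.1) + X (Sum.inr p.2) + 2)

theorem eval_denominator_ne_zero_iff (x y : Fin r → K) :
    eval (Sum.elim x y) denominator ≠ 0 ↔ Admissible x y := by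
  simp only [denominator, map_mul, map_prod, map_sub, map_add, eval_X, Sum.elim_inl,
    Sum.elim_inr, map_ofNat]
  rw [mul_ne_zero_iff, mul_ne_zero_iff, prod_filter_lt_sub_ne_zero_iff,
    prod_filter_lt_sub_ne_zero_iff, prod_ne_zero_iff]
  simp [Admissible, and_assoc]

theorem denominator_ne_zero [CharZero K] :
    (denominator : MvPolynomial (Fin r ⊕ Fin r) K) ≠ 0 := by
  have hadm : Admissible (fun k : Fin r => (k : K)) (fun k => (k : K)) :=
    ⟨Nat.cast_injective.comp Fin.val_injective, Nat.cast_injective.comp Fin.val_injective,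
      fun k l => by dsimp only; exact_mod_cast (by omega : (k : ℕ) + l + 2 ≠ 0)⟩
  intro h
  simpa [h] using (eval_denominator_ne_zero_iff _ _).mpr hadm

theorem eq_zero_of_forall_admissible [CharZero K] {P : MvPolynomial (Fin r ⊕ Fin r) K}
    (h : ∀ x y, Admissible x y → eval (Sum.elim x y) P = 0) : P = 0 :=
  eq_zero_of_eval_eq_zero_of_eval_ne_zero denominator_ne_zero fun z hz => by
    rw [← Sum.elim_comp_inl_inr z] at hz ⊢
    exact h _ _ ((eval_denominator_ne_zero_iff _ _).mp hz)

theorem rename_sumMap_eq_sign_smul [CharZero K] {A : MvPolynomial (Fin r ⊕ Fin r) K}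
    (hA : ∀ x y, Admissible x y → eval (Sum.elim x y) A = numerator x y)
    (σ τ : Equiv.Perm (Fin r)) :
    rename (Sum.map σ τ) A = (Equiv.Perm.sign σ * Equiv.Perm.sign τ) • A := by
  rw [← sub_eq_zero]
  refine eq_zero_of_forall_admissible fun x y hxy => ?_
  rw [map_sub, eval_rename, Sum.elim_comp_map, hA _ _ (hxy.comp_perm σ τ), numerator_comp_perm,
    Units.smul_def, map_zsmul, hA x y hxy, zsmul_eq_mul]
  push_cast
  ring

end DoubleProduct

/-- In the Double Product Lemma, the numerator polynomial `A` obtained by putting the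
right-hand side over the common denominator
`∏_{k<l}(x_k-x_l)(y_k-y_l) · ∏_{k,l}(x_k+y_l+2)` changes sign under any transposition of
two `x`-variables (and of two `y`-variables); consequently it is divisible by both
Vandermonde products.  The variables `x_i` (resp. `y_i`) are encoded as
`X (Sum.inl i)` (resp. `X (Sum.inr i)`). -/
theorem double_product_numerator_alternating {F : Type*} [Field F] [CharZero F] (r : ℕ)
    (A : MvPolynomial (Fin r ⊕ Fin r) F)
    (hA : ∀ x y : Fin r → F, Function.Injective x → Function.Injective y →
      (∀ k l, x k + y l + 2 ≠ 0) →
      MvPolynomial.eval (Sum.elim x y) A =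
        (∏ p ∈ (univ : Finset (Fin r × Fin r)).filter (fun p => p.1 < p.2),
            ((x p.1 - x p.2) * (y p.1 - y p.2))) *
        (∏ p : Fin r × Fin r, (x p.1 + y p.2 + 2)) *
        ((∏ k, (x k + 1) * (y k + 1))
          - (∑ l, (∏ k ∈ univ.erase l, (x k + 1)) * (∏ k, (y k + 1)) *
              (∏ k, (x l + y k + 1) / (x l + y k + 2)) *
              ∏ k ∈ univ.erase l, (x k - x l - 1) / (x k - x l))
          - ∑ l, (∏ k ∈ univ.erase l, (y k + 1)) * (∏ k, (x k + 1)) *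
              (∏ k, (y l + x k + 1) / (y l + x k + 2)) *
              ∏ k ∈ univ.erase l, (y k - y l - 1) / (y k - y l))) :
    (∀ a b : Fin r, a ≠ b →
        MvPolynomial.rename (Sum.map (⇑(Equiv.swap a b)) id) A = -A) ∧
    (∀ a b : Fin r, a ≠ b →
        MvPolynomial.rename (Sum.map id (⇑(Equiv.swap a b))) A = -A) ∧
    ((∏ p ∈ (univ : Finset (Fin r × Fin r)).filter (fun p => p.1 < p.2),
        (X (Sum.inl p.1) - X (Sum.inl p.2)) : MvPolynomial (Fin r ⊕ Fin r) F) ∣ A) ∧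
    ((∏ p ∈ (univ : Finset (Fin r × Fin r)).filter (fun p => p.1 < p.2),
        (X (Sum.inr p.1) - X (Sum.inr p.2)) : MvPolynomial (Fin r ⊕ Fin r) F) ∣ A) := by
  have hA' : ∀ x y, DoubleProduct.Admissible x y →
      eval (Sum.elim x y) A = DoubleProduct.numerator x y :=
    fun x y h => hA x y h.1 h.2.1 h.2.2
  have alt_x : ∀ a b : Fin r, a ≠ b → rename (Sum.map (⇑(Equiv.swap a b)) id) A = -A :=
    fun a b hab => by
      simpa [Equiv.Perm.sign_swap hab] using
        DoubleProduct.rename_sumMap_eq_sign_smul hA' (Equiv.swap a b) 1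
  have alt_y : ∀ a b : Fin r, a ≠ b → rename (Sum.map id (⇑(Equiv.swap a b))) A = -A :=
    fun a b hab => by
      simpa [Equiv.Perm.sign_swap hab] using
        DoubleProduct.rename_sumMap_eq_sign_smul hA' 1 (Equiv.swap a b)
  refine ⟨alt_x, alt_y,
    prod_X_sub_X_dvd_of_rename_swap_eq_neg Sum.inl_injective fun a b hab => ?_,
    prod_X_sub_X_dvd_of_rename_swap_eq_neg Sum.inr_injective fun a b hab => ?_⟩
  · rw [← Equiv.Perm.sumCongr_swap_refl]
    exact alt_x a b hab
  · rw [← Equiv.Perm.sumCongr_refl_swap]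
    exact alt_y a b hab
end

section
/- Substituting y_l = x_l − 1 for all l in the Double Sum Lemma yields the Sum Lemma: from ∑x_i + ∑y_j + r = (RHS of the double sum identity), one deduces x_1 + ⋯ + x_r = ∑_{l=1}^r x_l ∏_{j≠l} ((x_j − x_l + 1)(x_j + x_l)) / ((x_j − x_l)(x_j + x_l − 1)). -/
open Finset

theorem sum_add_sum_sub_one_add_card {ι R : Type*} [CommRing R] (s : Finset ι) (x : ι → R) :
    (∑ i ∈ s, x i) + (∑ i ∈ s, (x i - 1)) + (#s : R) = 2 * ∑ i ∈ s, x i := by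
  rw [sum_sub_distrib, sum_const, nsmul_one]
  ring

section SumLemma

variable {ι F : Type*} [Fintype ι] [DecidableEq ι] [Field F]

theorem prod_add_div_add_sub_one_eq_mul_prod_erase (x : ι → F) (t : ι) :
    ∏ l, (x t + x l) / (x t + x l - 1) =
      2 * x t / (2 * x t - 1) * ∏ l ∈ univ.erase t, (x t + x l) / (x t + x l - 1) := by
  rw [← mul_prod_erase univ _ (mem_univ t), two_mul]

/-- With `y = x - 1` the two summands of the Double Sum Lemma indexed by `t` share the factor
`∏ l, (x t + x l) / (x t + x l - 1)`, whose `l = t` factor `2 x_t / (2 x_t - 1)` cancels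
against `x t + (x t - 1)`. -/
theorem double_sum_terms_eq_two_mul (x : ι → F) (t : ι) (ht : 2 * x t ≠ 1) :
    x t * (∏ k ∈ univ.erase t, (x k - x t + 1) / (x k - x t)) *
        (∏ l, (x t + (x l - 1) + 1) / (x t + (x l - 1))) +
      (x t - 1) * (∏ k ∈ univ.erase t, ((x k - 1) - (x t - 1) + 1) / ((x k - 1) - (x t - 1))) *
        (∏ l, (x l + (x t - 1) + 1) / (x l + (x t - 1))) =
      2 * (x t * ∏ j ∈ univ.erase t,
        ((x j - x t + 1) * (x j + x t)) / ((x j - x t) * (x j + x t - 1))) := by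
  set A := ∏ k ∈ univ.erase t, (x k - x t + 1) / (x k - x t)
  set P := ∏ l ∈ univ.erase t, (x t + x l) / (x t + x l - 1)
  have hA : ∏ k ∈ univ.erase t, ((x k - 1) - (x t - 1) + 1) / ((x k - 1) - (x t - 1)) = A := by
    simp only [sub_sub_sub_cancel_right, A]
  have hQ : ∏ l, (x t + (x l - 1) + 1) / (x t + (x l - 1)) = 2 * x t / (2 * x t - 1) * P := by
    rw [← prod_add_div_add_sub_one_eq_mul_prod_erase]
    exact prod_congr rfl fun l _ => by ring
  have hQ' : ∏ l, (x l + (x t - 1) + 1) / (x l + (x t - 1)) = 2 * x t / (2 * x t - 1) * P := by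
    rw [← prod_add_div_add_sub_one_eq_mul_prod_erase]
    exact prod_congr rfl fun l _ => by ring
  have hAP : ∏ j ∈ univ.erase t,
      ((x j - x t + 1) * (x j + x t)) / ((x j - x t) * (x j + x t - 1)) = A * P := by
    rw [← prod_mul_distrib]
    exact prod_congr rfl fun j _ => by rw [div_mul_div_comm]; ring
  have hcancel : 2 * x t / (2 * x t - 1) * (2 * x t - 1) = 2 * x t :=
    div_mul_cancel₀ _ (sub_ne_zero.mpr ht)
  rw [hA, hQ, hQ', hAP]
  linear_combination A * P * hcancel

end SumLemma

theorem sum_lemma_of_double_sum_lemma_general {F : Type*} [Field F] [CharZero F] (r : ℕ)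
    (x : Fin r → F) (h2 : ∀ l, 2 * x l ≠ 1)
    (hds : (∑ i, x i) + (∑ j, (x j - 1)) + (r : F) =
      (∑ t, x t * (∏ k ∈ univ.erase t, (x k - x t + 1) / (x k - x t)) *
          ∏ l, (x t + (x l - 1) + 1) / (x t + (x l - 1))) +
      ∑ m, (x m - 1) * (∏ k ∈ univ.erase m,
            ((x k - 1) - (x m - 1) + 1) / ((x k - 1) - (x m - 1))) *
          ∏ l, (x l + (x m - 1) + 1) / (x l + (x m - 1))) :
    ∑ i, x i = ∑ l, x l * ∏ j ∈ univ.erase l,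
      ((x j - x l + 1) * (x j + x l)) / ((x j - x l) * (x j + x l - 1)) := by
  have hlhs := sum_add_sum_sub_one_add_card univ x
  rw [card_univ, Fintype.card_fin] at hlhs
  rw [hlhs, ← sum_add_distrib,
    sum_congr rfl fun t _ => double_sum_terms_eq_two_mul x t (h2 t), ← mul_sum] at hds
  exact mul_left_cancel₀ two_ne_zero hds

/-- Substituting `y l = x l - 1` in the Double Sum Lemma yields the Sum Lemma. -/
theorem sum_lemma_of_double_sum_lemma {F : Type*} [Field F] [CharZero F] (r : ℕ) (hr : 0 < r)
    (x : Fin r → F) (hx : Function.Injective x)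
    (h1 : ∀ j l, j ≠ l → x j + x l ≠ 1) (h2 : ∀ l, 2 * x l ≠ 1)
    (hds : (∑ i, x i) + (∑ j, (x j - 1)) + (r : F) =
      (∑ t, x t * (∏ k ∈ univ.erase t, (x k - x t + 1) / (x k - x t)) *
          ∏ l, (x t + (x l - 1) + 1) / (x t + (x l - 1))) +
      ∑ m, (x m - 1) * (∏ k ∈ univ.erase m,
            ((x k - 1) - (x m - 1) + 1) / ((x k - 1) - (x m - 1))) *
          ∏ l, (x l + (x m - 1) + 1) / (x l + (x m - 1))) :
    ∑ i, x i = ∑ l, x l * ∏ j ∈ univ.erase l,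
      ((x j - x l + 1) * (x j + x l)) / ((x j - x l) * (x j + x l - 1)) :=
  sum_lemma_of_double_sum_lemma_general r x h2 hds
end
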